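/- arXiv:1502.07594 — 7 statements merged into one kernel-verified Lean document; each statement's English description precedes it below -/
import Mathlib

section
/- There exists an absolute constant C > 0 with the following property. Let A = (a_{ij}) be a 2×2 integer matrix with gcd(a₁₁,a₂₁,a₁₂,a₂₂) = 1 and determinant Δ = det(A) ≠ 0, and let f(x,y) = xᵀAy be the associated bilinear form. Then for all real numbers X₁,X₂,Y₁,Y₂ ≥ 1, the number N of pairs (x,y) ∈ ℤ²×ℤ² with |x_i| ≤ X_i, |y_i| ≤ Y_i, gcd(x₁,x₂) = gcd(y₁,y₂) = 1 and f(x,y) = 0 satisfies N ≤ C · min{ X₁X₂, Y₁Y₂, d(|Δ|)·(√(X₁X₂Y₁Y₂/|Δ|) + 1) }, where d(n) denotes the number of positive divisors of n. -/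
/-!
For a solution `(x, y)` the vector `xᵀA` is orthogonal to the primitive vector `y`, so
`xᵀA = λ • (y₂, -y₁)` for an integer `λ`, and `λ ∣ Δ` because `x` is primitive. Since `y` is
determined up to sign by `x` (and symmetrically), there are `O(X₁X₂)` and `O(Y₁Y₂)` solutions.
For a fixed `λ`, two solutions satisfy `Δ · det(x, x') = λ² · det(y, y')`, and `λ ∣ det(x, x')`
because the entries of `A` are coprime. So the `x` span lines whose pairwise determinants are at
least `|λ|`, and the `y` lines with determinants at least `|Δ| / |λ|`. Lines through a box
`[-X₁, X₁] × [-X₂, X₂]` with pairwise determinants at least `m` number `O(X₁X₂ / m + 1)`: in the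
sector `|v₂| / X₂ ≤ |v₁| / X₁` their slopes `v₂ / v₁` are `m / X₁²`-separated in an interval of
length `2X₂ / X₁`, and symmetrically in the other sector. Each of the `2 d(|Δ|)` values of `λ`
thus contributes `O(min(X₁X₂ / |λ|, Y₁Y₂ |λ| / |Δ|) + 1) = O(√(X₁X₂Y₁Y₂ / |Δ|) + 1)` solutions.
-/

open Finset
open scoped Matrix

lemma Int.dvd_gcd_mul {l u w d : ℤ} (hu : l ∣ u * d) (hw : l ∣ w * d) :
    l ∣ Int.gcd u w * d := by
  have : (Int.gcd u w : ℤ) * d = u * d * Int.gcdA u w + w * d * Int.gcdB u w := by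
    rw [Int.gcd_eq_gcd_ab]; ring
  rw [this]
  exact dvd_add (hu.mul_right _) (hw.mul_right _)

lemma Int.card_divisors (z : ℤ) : #z.divisors = 2 * #z.natAbs.divisors := by
  rw [Int.divisors, card_disjUnion, card_map, card_map]; ring

lemma card_le_of_abs_sub_ge {t : Finset ℝ} {R δ : ℝ} (hR : 0 ≤ R) (hδ : 0 < δ)
    (ht : ∀ x ∈ t, |x| ≤ R) (hsep : ∀ x ∈ t, ∀ y ∈ t, x ≠ y → δ ≤ |x - y|) :
    (#t : ℝ) ≤ 2 * R / δ + 1 := by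
  have hmaps : Set.MapsTo (fun x ↦ ⌊(x + R) / δ⌋) t (Icc 0 ⌊2 * R / δ⌋) := by
    intro x hx
    have := abs_le.mp (ht x hx)
    rw [coe_Icc, Set.mem_Icc]
    exact ⟨Int.floor_nonneg.mpr (div_nonneg (by linarith) hδ.le),
      Int.floor_le_floor (by gcongr; linarith)⟩
  have hinj : Set.InjOn (fun x ↦ ⌊(x + R) / δ⌋) t := by
    intro x hx y hy hxy
    by_contra hne
    have := Int.abs_sub_lt_one_of_floor_eq_floor hxy
    rw [← sub_div, add_sub_add_right_eq_sub, abs_div, abs_of_pos hδ, div_lt_one hδ] at this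
    exact (hsep x hx y hy hne).not_gt this
  have hfloor : (0 : ℤ) ≤ ⌊2 * R / δ⌋ + 1 := by
    have := Int.floor_nonneg.mpr (by positivity : 0 ≤ 2 * R / δ); omega
  calc (#t : ℝ) ≤ #(Icc 0 ⌊2 * R / δ⌋) := mod_cast card_le_card_of_injOn _ hmaps hinj
    _ = ⌊2 * R / δ⌋ + 1 := by
      rw [Int.card_Icc, sub_zero, ← Int.cast_natCast, Int.toNat_of_nonneg hfloor]
      push_cast; ring
    _ ≤ 2 * R / δ + 1 := by gcongr; exact Int.floor_le _

lemma min_le_sqrt_mul {u w : ℝ} (hu : 0 ≤ u) (hw : 0 ≤ w) : min u w ≤ √(u * w) :=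
  Real.le_sqrt_of_sq_le (by
    rw [sq]; exact mul_le_mul (min_le_left u w) (min_le_right u w) (le_min hu hw) hu)

def det₂ (v w : ℤ × ℤ) : ℤ := v.1 * w.2 - v.2 * w.1

def dot₂ (v w : ℤ × ℤ) : ℤ := v.1 * w.1 + v.2 * w.2

def perp (y : ℤ × ℤ) : ℤ × ℤ := (y.2, -y.1)

lemma perp_injective : Function.Injective perp := by
  intro y z h
  simp only [perp, Prod.ext_iff, neg_inj] at h
  exact Prod.ext h.2 h.1

lemma det₂_swap (v w : ℤ × ℤ) : det₂ v.swap w.swap = -det₂ v w := by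
  simp only [det₂, Prod.fst_swap, Prod.snd_swap]; ring

lemma det₂_smul_perp (l : ℤ) (y z : ℤ × ℤ) :
    det₂ (l • perp y) (l • perp z) = l ^ 2 * det₂ y z := by
  simp only [det₂, perp, Prod.smul_mk, smul_eq_mul]; ring

lemma ne_zero_of_gcd_eq_one {x : ℤ × ℤ} (hx : Int.gcd x.1 x.2 = 1) : x ≠ 0 := by
  rintro rfl
  simp at hx

lemma exists_eq_smul_perp {v y : ℤ × ℤ} (hy : Int.gcd y.1 y.2 = 1) (h : dot₂ v y = 0) :
    ∃ l : ℤ, v = l • perp y := by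
  obtain ⟨s, t, hst⟩ := Int.isCoprime_iff_gcd_eq_one.mpr hy
  unfold dot₂ at h
  refine ⟨t * v.1 - s * v.2, Prod.ext ?_ ?_⟩ <;> simp only [perp, Prod.smul_mk, smul_eq_mul]
  · linear_combination -v.1 * hst + s * h
  · linear_combination -v.2 * hst + t * h

lemma eq_or_eq_neg_of_det₂_eq_zero {x y : ℤ × ℤ} (hx : Int.gcd x.1 x.2 = 1)
    (hy : Int.gcd y.1 y.2 = 1) (h : det₂ x y = 0) : y = x ∨ y = -x := by
  obtain ⟨l, hl⟩ := exists_eq_smul_perp (v := perp y) hx (by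
    simp only [dot₂, perp, det₂] at h ⊢; linear_combination h)
  have hyx : y = l • x := by
    simp only [perp, Prod.ext_iff, Prod.smul_mk, smul_eq_mul] at hl
    exact Prod.ext (by simp only [Prod.smul_fst, smul_eq_mul]; linarith) (by simpa using hl.1)
  rw [hyx, Prod.smul_fst, Prod.smul_snd, smul_eq_mul, smul_eq_mul, Int.gcd_mul_left, hx,
    mul_one] at hy
  rcases Int.natAbs_eq_iff.mp hy with rfl | rfl
  · exact .inl (by simpa using hyx)
  · exact .inr (by simpa using hyx)

lemma eq_or_eq_neg_of_dot₂_eq_zero {v y z : ℤ × ℤ} (hv : v ≠ 0) (hy : Int.gcd y.1 y.2 = 1)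
    (hz : Int.gcd z.1 z.2 = 1) (hvy : dot₂ v y = 0) (hvz : dot₂ v z = 0) : z = y ∨ z = -y := by
  obtain ⟨l, rfl⟩ := exists_eq_smul_perp hy hvy
  have hl : l ≠ 0 := by rintro rfl; simp at hv
  refine eq_or_eq_neg_of_det₂_eq_zero hy hz ((mul_eq_zero.mp ?_).resolve_left hl)
  simp only [dot₂, det₂, perp, Prod.smul_mk, smul_eq_mul] at hvz ⊢
  linear_combination -hvz

section Separated

variable {α : Type*} (s : Finset α) (v : α → ℤ × ℤ) {X₁ X₂ m : ℝ}

lemma card_le_of_det₂_ge_of_flat (hX₁ : 0 < X₁) (hX₂ : 0 ≤ X₂) (hm : 0 < m)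
    (hflat : ∀ a ∈ s, (v a).1 ≠ 0 ∧ |((v a).1 : ℝ)| ≤ X₁ ∧
      |((v a).2 : ℝ)| * X₁ ≤ |((v a).1 : ℝ)| * X₂)
    (hsep : ∀ a ∈ s, ∀ b ∈ s, det₂ (v a) (v b) ≠ 0 → m ≤ |(det₂ (v a) (v b) : ℝ)|)
    (hfib : ∀ a ∈ s, #{b ∈ s | det₂ (v a) (v b) = 0} ≤ 2) :
    (#s : ℝ) ≤ 2 * (2 * X₁ * X₂ / m + 1) := by
  classical
  set σ : α → ℝ := fun a ↦ ((v a).2 : ℝ) / (v a).1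
  have hsub : ∀ a ∈ s, ∀ b ∈ s,
      σ a - σ b = -(det₂ (v a) (v b) : ℝ) / ((v a).1 * (v b).1) := by
    intro a ha b hb
    have := Int.cast_ne_zero (α := ℝ) |>.mpr (hflat a ha).1
    have := Int.cast_ne_zero (α := ℝ) |>.mpr (hflat b hb).1
    simp only [σ, det₂]; push_cast; field_simp; ring
  have hfiber : #s ≤ 2 * #(s.image σ) := card_le_mul_card_image s 2 (by
    intro _ hx
    obtain ⟨a, ha, rfl⟩ := mem_image.mp hx
    refine (card_le_card fun b hb ↦ ?_).trans (hfib a ha)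
    obtain ⟨hb, hσ⟩ := mem_filter.mp hb
    have := hsub a ha b hb
    rw [hσ, sub_self, eq_comm, div_eq_zero_iff, neg_eq_zero, Int.cast_eq_zero] at this
    refine mem_filter.mpr ⟨hb, this.resolve_right ?_⟩
    have := (hflat a ha).1; have := (hflat b hb).1
    positivity)
  have himage : (#(s.image σ) : ℝ) ≤ 2 * (X₂ / X₁) / (m / X₁ ^ 2) + 1 := by
    refine card_le_of_abs_sub_ge (by positivity) (by positivity) ?_ ?_
    · intro _ hx
      obtain ⟨a, ha, rfl⟩ := mem_image.mp hx
      obtain ⟨h0, -, h⟩ := hflat a ha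
      rw [abs_div, div_le_div_iff₀ (by positivity) hX₁]
      linarith
    · intro _ hx _ hy hne
      obtain ⟨a, ha, rfl⟩ := mem_image.mp hx
      obtain ⟨b, hb, rfl⟩ := mem_image.mp hy
      obtain ⟨ha0, ha1, -⟩ := hflat a ha
      obtain ⟨hb0, hb1, -⟩ := hflat b hb
      have hdet : det₂ (v a) (v b) ≠ 0 := by
        intro h0
        exact hne (sub_eq_zero.mp (by rw [hsub a ha b hb, h0]; simp))
      rw [hsub a ha b hb, abs_div, abs_neg, abs_mul, sq]
      gcongr
      exact hsep a ha b hb hdet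
  calc (#s : ℝ) ≤ 2 * #(s.image σ) := by exact_mod_cast hfiber
    _ ≤ 2 * (2 * (X₂ / X₁) / (m / X₁ ^ 2) + 1) := by gcongr
    _ = 2 * (2 * X₁ * X₂ / m + 1) := by field_simp

lemma card_le_of_det₂_ge (hX₁ : 0 < X₁) (hX₂ : 0 < X₂) (hm : 0 < m)
    (hbox : ∀ a ∈ s, |((v a).1 : ℝ)| ≤ X₁ ∧ |((v a).2 : ℝ)| ≤ X₂) (hne : ∀ a ∈ s, v a ≠ 0)
    (hsep : ∀ a ∈ s, ∀ b ∈ s, det₂ (v a) (v b) ≠ 0 → m ≤ |(det₂ (v a) (v b) : ℝ)|)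
    (hfib : ∀ a ∈ s, #{b ∈ s | det₂ (v a) (v b) = 0} ≤ 2) :
    (#s : ℝ) ≤ 8 * X₁ * X₂ / m + 4 := by
  classical
  set P : α → Prop := fun a ↦ |((v a).2 : ℝ)| * X₁ ≤ |((v a).1 : ℝ)| * X₂
  have hfib' : ∀ t ⊆ s, ∀ a ∈ t, #{b ∈ t | det₂ (v a) (v b) = 0} ≤ 2 := fun t ht a ha ↦
    (card_le_card (filter_subset_filter _ ht)).trans (hfib a (ht ha))
  have hP := card_le_of_det₂_ge_of_flat (s.filter P) v hX₁ hX₂.le hm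
    (fun a ha ↦ by
      obtain ⟨ha, hPa⟩ := mem_filter.mp ha
      refine ⟨fun h0 ↦ hne a ha ?_, (hbox a ha).1, hPa⟩
      simp only [P, h0, Int.cast_zero, abs_zero, zero_mul] at hPa
      have : |((v a).2 : ℝ)| = 0 := by nlinarith [abs_nonneg ((v a).2 : ℝ)]
      exact Prod.ext h0 (by simpa using this))
    (fun a ha b hb ↦ hsep a (mem_filter.mp ha).1 b (mem_filter.mp hb).1)
    (hfib' _ (filter_subset _ _))
  have hnP := card_le_of_det₂_ge_of_flat (s.filter (¬P ·)) (Prod.swap ∘ v) hX₂ hX₁.le hm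
    (fun a ha ↦ by
      obtain ⟨ha, hPa⟩ := mem_filter.mp ha
      simp only [P, not_le] at hPa
      refine ⟨fun h0 ↦ ?_, (hbox a ha).2, hPa.le⟩
      simp only [Function.comp_apply, Prod.fst_swap] at h0
      simp only [h0, Int.cast_zero, abs_zero, zero_mul] at hPa
      nlinarith [abs_nonneg ((v a).1 : ℝ)])
    (fun a ha b hb h ↦ by
      simp only [Function.comp_apply, det₂_swap, Int.cast_neg, abs_neg, ne_eq, neg_eq_zero] at h ⊢
      exact hsep a (mem_filter.mp ha).1 b (mem_filter.mp hb).1 h)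
    (fun a ha ↦ by
      simpa only [Function.comp_apply, det₂_swap, neg_eq_zero]
        using hfib' _ (filter_subset _ _) a ha)
  rw [← card_filter_add_card_filter_not P]
  push_cast
  linarith [show 8 * X₁ * X₂ / m + 4 = 2 * (2 * X₁ * X₂ / m + 1) + 2 * (2 * X₂ * X₁ / m + 1) by
    ring]

end Separated

noncomputable def box (X₁ X₂ : ℝ) : Finset (ℤ × ℤ) := Icc (-⌊X₁⌋) ⌊X₁⌋ ×ˢ Icc (-⌊X₂⌋) ⌊X₂⌋

lemma mem_Icc_neg_floor_iff {x : ℤ} {X : ℝ} : x ∈ Icc (-⌊X⌋) ⌊X⌋ ↔ |(x : ℝ)| ≤ X := by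
  rw [mem_Icc, abs_le, neg_le, Int.le_floor, Int.le_floor, Int.cast_neg, neg_le]

lemma mem_box {x : ℤ × ℤ} {X₁ X₂ : ℝ} : x ∈ box X₁ X₂ ↔ |(x.1 : ℝ)| ≤ X₁ ∧ |(x.2 : ℝ)| ≤ X₂ := by
  rw [box.eq_1, mem_product, mem_Icc_neg_floor_iff, mem_Icc_neg_floor_iff]

lemma card_Icc_neg_floor_le {X : ℝ} (hX : 1 ≤ X) : (#(Icc (-⌊X⌋) ⌊X⌋) : ℝ) ≤ 3 * X := by
  have h0 : 0 ≤ ⌊X⌋ := Int.floor_nonneg.mpr (by linarith)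
  rw [Int.card_Icc, ← Int.cast_natCast, Int.toNat_of_nonneg (by omega)]
  push_cast
  linarith [Int.floor_le X]

lemma card_box_le {X₁ X₂ : ℝ} (hX₁ : 1 ≤ X₁) (hX₂ : 1 ≤ X₂) :
    (#(box X₁ X₂) : ℝ) ≤ 9 * (X₁ * X₂) := by
  rw [box.eq_1, card_product, Nat.cast_mul]
  calc _ ≤ (3 * X₁) * (3 * X₂) := by
        gcongr
        exacts [card_Icc_neg_floor_le hX₁, card_Icc_neg_floor_le hX₂]
    _ = 9 * (X₁ * X₂) := by ring

section BilinearForm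

variable {a : Matrix (Fin 2) (Fin 2) ℤ}

def vecMul₂ (x : ℤ × ℤ) (a : Matrix (Fin 2) (Fin 2) ℤ) : ℤ × ℤ :=
  (x.1 * a 0 0 + x.2 * a 1 0, x.1 * a 0 1 + x.2 * a 1 1)

lemma dot₂_vecMul₂ (x y : ℤ × ℤ) : dot₂ (vecMul₂ x a) y =
    a 0 0 * x.1 * y.1 + a 0 1 * x.1 * y.2 + a 1 0 * x.2 * y.1 + a 1 1 * x.2 * y.2 := by
  simp only [dot₂, vecMul₂]; ring

lemma det₂_vecMul₂ (x x' : ℤ × ℤ) : det₂ (vecMul₂ x a) (vecMul₂ x' a) = a.det * det₂ x x' := by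
  simp only [det₂, vecMul₂, Matrix.det_fin_two]; ring

lemma dvd_det_of_vecMul₂_eq_smul {x w : ℤ × ℤ} {l : ℤ} (hx : Int.gcd x.1 x.2 = 1)
    (h : vecMul₂ x a = l • w) : l ∣ a.det := by
  simp only [vecMul₂, Prod.ext_iff, Prod.smul_fst, Prod.smul_snd, smul_eq_mul] at h
  have := Int.dvd_gcd_mul (l := l) (u := x.1) (w := x.2) (d := a.det)
    ⟨a 1 1 * w.1 - a 1 0 * w.2, by
      rw [Matrix.det_fin_two]; linear_combination a 1 1 * h.1 - a 1 0 * h.2⟩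
    ⟨a 0 0 * w.2 - a 0 1 * w.1, by
      rw [Matrix.det_fin_two]; linear_combination a 0 0 * h.2 - a 0 1 * h.1⟩
  rwa [hx, Nat.cast_one, one_mul] at this

lemma vecMul₂_ne_zero (ha : a.det ≠ 0) {x : ℤ × ℤ} (hx : Int.gcd x.1 x.2 = 1) :
    vecMul₂ x a ≠ 0 := fun h ↦
  ha (zero_dvd_iff.mp (dvd_det_of_vecMul₂_eq_smul hx (w := 0) (by rw [h, smul_zero])))

lemma det_mul_det₂_eq_sq_mul_det₂ {x x' y y' : ℤ × ℤ} {l : ℤ} (h : vecMul₂ x a = l • perp y)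
    (h' : vecMul₂ x' a = l • perp y') : a.det * det₂ x x' = l ^ 2 * det₂ y y' := by
  rw [← det₂_vecMul₂, h, h', det₂_smul_perp]

lemma dvd_det₂_of_vecMul₂_eq_smul
    (hcont : Int.gcd (Int.gcd (a 0 0) (a 1 0)) (Int.gcd (a 0 1) (a 1 1)) = 1)
    {x x' w w' : ℤ × ℤ} {l : ℤ} (h : vecMul₂ x a = l • w) (h' : vecMul₂ x' a = l • w') :
    l ∣ det₂ x x' := by
  simp only [vecMul₂, Prod.ext_iff, Prod.smul_fst, Prod.smul_snd, smul_eq_mul] at h h'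
  have h₀ := Int.dvd_gcd_mul (l := l) (u := a 0 0) (w := a 1 0) (d := det₂ x x')
    ⟨w.1 * x'.2 - w'.1 * x.2, by simp only [det₂]; linear_combination x'.2 * h.1 - x.2 * h'.1⟩
    ⟨w'.1 * x.1 - w.1 * x'.1, by simp only [det₂]; linear_combination x.1 * h'.1 - x'.1 * h.1⟩
  have h₁ := Int.dvd_gcd_mul (l := l) (u := a 0 1) (w := a 1 1) (d := det₂ x x')
    ⟨w.2 * x'.2 - w'.2 * x.2, by simp only [det₂]; linear_combination x'.2 * h.2 - x.2 * h'.2⟩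
    ⟨w'.2 * x.1 - w.2 * x'.1, by simp only [det₂]; linear_combination x.1 * h'.2 - x'.1 * h.2⟩
  have := Int.dvd_gcd_mul h₀ h₁
  rwa [hcont, Nat.cast_one, one_mul] at this

end BilinearForm

section Solutions

variable {a : Matrix (Fin 2) (Fin 2) ℤ} {X₁ X₂ Y₁ Y₂ : ℝ}

def IsSolution (a : Matrix (Fin 2) (Fin 2) ℤ) (X₁ X₂ Y₁ Y₂ : ℝ) (p : (ℤ × ℤ) × (ℤ × ℤ)) :
    Prop :=
  (|p.1.1| : ℝ) ≤ X₁ ∧ (|p.1.2| : ℝ) ≤ X₂ ∧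
  (|p.2.1| : ℝ) ≤ Y₁ ∧ (|p.2.2| : ℝ) ≤ Y₂ ∧
  Int.gcd p.1.1 p.1.2 = 1 ∧ Int.gcd p.2.1 p.2.2 = 1 ∧
  a 0 0 * p.1.1 * p.2.1 + a 0 1 * p.1.1 * p.2.2 +
    a 1 0 * p.1.2 * p.2.1 + a 1 1 * p.1.2 * p.2.2 = 0

lemma IsSolution.transpose_swap {p : (ℤ × ℤ) × (ℤ × ℤ)} (h : IsSolution a X₁ X₂ Y₁ Y₂ p) :
    IsSolution aᵀ Y₁ Y₂ X₁ X₂ p.swap := by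
  obtain ⟨hx₁, hx₂, hy₁, hy₂, hx, hy, heq⟩ := h
  refine ⟨hy₁, hy₂, hx₁, hx₂, hy, hx, ?_⟩
  simp only [Prod.fst_swap, Prod.snd_swap, Matrix.transpose_apply]
  linear_combination heq

lemma finite_setOf_isSolution : {p | IsSolution a X₁ X₂ Y₁ Y₂ p}.Finite :=
  (box X₁ X₂ ×ˢ box Y₁ Y₂).finite_toSet.subset fun _ ⟨hx₁, hx₂, hy₁, hy₂, _⟩ ↦
    mem_product.mpr ⟨mem_box.mpr ⟨hx₁, hx₂⟩, mem_box.mpr ⟨hy₁, hy₂⟩⟩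

lemma card_le_of_isSolution_fst (ha : a.det ≠ 0) (hX₁ : 1 ≤ X₁) (hX₂ : 1 ≤ X₂)
    {s : Finset ((ℤ × ℤ) × (ℤ × ℤ))} (hs : ∀ p ∈ s, IsSolution a X₁ X₂ Y₁ Y₂ p) :
    (#s : ℝ) ≤ 18 * (X₁ * X₂) := by
  classical
  have hfiber : #s ≤ 2 * #(s.image Prod.fst) := card_le_mul_card_image s 2 (by
    intro _ hx
    obtain ⟨p, hp, rfl⟩ := mem_image.mp hx
    refine (card_le_card (t := {p, (p.1, -p.2)}) fun q hq ↦ ?_).trans card_le_two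
    obtain ⟨hq, hqp⟩ := mem_filter.mp hq
    obtain ⟨-, -, -, -, hpx, hpy, hp0⟩ := hs p hp
    obtain ⟨-, -, -, -, -, hqy, hq0⟩ := hs q hq
    rw [← dot₂_vecMul₂] at hp0 hq0
    rw [hqp] at hq0
    rcases eq_or_eq_neg_of_dot₂_eq_zero (vecMul₂_ne_zero ha hpx) hpy hqy hp0 hq0 with h | h <;>
      simp [Prod.ext_iff, hqp, h])
  have himage : s.image Prod.fst ⊆ box X₁ X₂ := fun x hx ↦ by
    obtain ⟨p, hp, rfl⟩ := mem_image.mp hx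
    exact mem_box.mpr ⟨(hs p hp).1, (hs p hp).2.1⟩
  calc (#s : ℝ) ≤ 2 * #(box X₁ X₂) := by exact_mod_cast hfiber.trans (by gcongr)
    _ ≤ 2 * (9 * (X₁ * X₂)) := by gcongr; exact card_box_le hX₁ hX₂
    _ = 18 * (X₁ * X₂) := by ring

lemma card_le_of_isSolution_snd (ha : a.det ≠ 0) (hY₁ : 1 ≤ Y₁) (hY₂ : 1 ≤ Y₂)
    {s : Finset ((ℤ × ℤ) × (ℤ × ℤ))} (hs : ∀ p ∈ s, IsSolution a X₁ X₂ Y₁ Y₂ p) :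
    (#s : ℝ) ≤ 18 * (Y₁ * Y₂) := by
  have := card_le_of_isSolution_fst (a := aᵀ) (by rwa [Matrix.det_transpose]) hY₁ hY₂
    (s := s.image Prod.swap) fun _ hq ↦ by
      obtain ⟨p, hp, rfl⟩ := mem_image.mp hq
      exact (hs p hp).transpose_swap
  rwa [card_image_of_injective _ Prod.swap_injective] at this

lemma card_filter_det₂_fst_eq_zero_le_two {l : ℤ} (hl : l ≠ 0)
    {F : Finset ((ℤ × ℤ) × (ℤ × ℤ))}
    (hF : ∀ p ∈ F, Int.gcd p.1.1 p.1.2 = 1 ∧ vecMul₂ p.1 a = l • perp p.2)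
    {p : (ℤ × ℤ) × (ℤ × ℤ)} (hp : p ∈ F) : #{q ∈ F | det₂ p.1 q.1 = 0} ≤ 2 := by
  classical
  have hinj : Set.InjOn Prod.fst (F : Set ((ℤ × ℤ) × (ℤ × ℤ))) := fun q hq r hr h ↦ by
    have hqr := (hF q hq).2
    rw [h, (hF r hr).2] at hqr
    exact Prod.ext h (perp_injective (smul_right_injective _ hl hqr)).symm
  refine (card_le_card_of_injOn Prod.fst (t := {p.1, -p.1}) (fun q hq ↦ ?_)
    (hinj.mono fun q hq ↦ (mem_filter.mp hq).1)).trans card_le_two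
  obtain ⟨hq, h0⟩ := mem_filter.mp hq
  rcases eq_or_eq_neg_of_det₂_eq_zero (hF p hp).1 (hF q hq).1 h0 with h | h <;> simp [h]

lemma card_le_of_forall_vecMul₂_eq_smul_perp_fst
    (hcont : Int.gcd (Int.gcd (a 0 0) (a 1 0)) (Int.gcd (a 0 1) (a 1 1)) = 1)
    {l : ℤ} (hl : l ≠ 0) (hX₁ : 0 < X₁) (hX₂ : 0 < X₂) {F : Finset ((ℤ × ℤ) × (ℤ × ℤ))}
    (hF : ∀ p ∈ F, IsSolution a X₁ X₂ Y₁ Y₂ p ∧ vecMul₂ p.1 a = l • perp p.2) :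
    (#F : ℝ) ≤ 8 * X₁ * X₂ / |(l : ℝ)| + 4 := by
  refine card_le_of_det₂_ge F Prod.fst hX₁ hX₂ (by positivity)
    (fun p hp ↦ ⟨(hF p hp).1.1, (hF p hp).1.2.1⟩)
    (fun p hp ↦ ne_zero_of_gcd_eq_one (hF p hp).1.2.2.2.2.1) (fun p hp q hq h ↦ ?_)
    (fun p hp ↦ card_filter_det₂_fst_eq_zero_le_two hl
      (fun q hq ↦ ⟨(hF q hq).1.2.2.2.2.1, (hF q hq).2⟩) hp)
  have := Int.le_of_dvd (abs_pos.mpr h)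
    ((abs_dvd_abs _ _).mpr (dvd_det₂_of_vecMul₂_eq_smul hcont (hF p hp).2 (hF q hq).2))
  exact_mod_cast this

lemma card_le_of_forall_vecMul₂_eq_smul_perp_snd
    (hcont : Int.gcd (Int.gcd (a 0 0) (a 1 0)) (Int.gcd (a 0 1) (a 1 1)) = 1) (ha : a.det ≠ 0)
    {l : ℤ} (hl : l ≠ 0) (hY₁ : 0 < Y₁) (hY₂ : 0 < Y₂) {F : Finset ((ℤ × ℤ) × (ℤ × ℤ))}
    (hF : ∀ p ∈ F, IsSolution a X₁ X₂ Y₁ Y₂ p ∧ vecMul₂ p.1 a = l • perp p.2) :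
    (#F : ℝ) ≤ 8 * Y₁ * Y₂ * |(l : ℝ)| / |(a.det : ℝ)| + 4 := by
  have hdet : ∀ p ∈ F, ∀ q ∈ F, a.det * det₂ p.1 q.1 = l ^ 2 * det₂ p.2 q.2 :=
    fun p hp q hq ↦ det_mul_det₂_eq_sq_mul_det₂ (hF p hp).2 (hF q hq).2
  rw [← div_div_eq_mul_div]
  refine card_le_of_det₂_ge F Prod.snd hY₁ hY₂ (by positivity)
    (fun p hp ↦ ⟨(hF p hp).1.2.2.1, (hF p hp).1.2.2.2.1⟩)
    (fun p hp ↦ ne_zero_of_gcd_eq_one (hF p hp).1.2.2.2.2.2.1) (fun p hp q hq h ↦ ?_)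
    (fun p hp ↦ (card_le_card fun q hq ↦ ?_).trans (card_filter_det₂_fst_eq_zero_le_two hl
      (fun q hq ↦ ⟨(hF q hq).1.2.2.2.2.1, (hF q hq).2⟩) hp))
  · have hx : det₂ p.1 q.1 ≠ 0 := fun h0 ↦ by
      have := hdet p hp q hq
      rw [h0, mul_zero, eq_comm] at this
      exact h ((mul_eq_zero.mp this).resolve_left (pow_ne_zero 2 hl))
    have hsep : |(l : ℝ)| ≤ |(det₂ p.1 q.1 : ℝ)| := by
      have := Int.le_of_dvd (abs_pos.mpr hx)
        ((abs_dvd_abs _ _).mpr (dvd_det₂_of_vecMul₂_eq_smul hcont (hF p hp).2 (hF q hq).2))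
      exact_mod_cast this
    have habs : |(a.det : ℝ)| * |(det₂ p.1 q.1 : ℝ)| = |(l : ℝ)| ^ 2 * |(det₂ p.2 q.2 : ℝ)| := by
      rw [← abs_mul, ← abs_pow, ← abs_mul]
      exact_mod_cast congrArg abs (hdet p hp q hq)
    have hl' : 0 < |(l : ℝ)| := by positivity
    rw [div_le_iff₀ hl']
    nlinarith [abs_nonneg (a.det : ℝ)]
  · obtain ⟨hq, h0⟩ := mem_filter.mp hq
    have := hdet p hp q hq
    rw [h0, mul_zero] at this
    exact mem_filter.mpr ⟨hq, (mul_eq_zero.mp this).resolve_left ha⟩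

lemma card_le_of_forall_vecMul₂_eq_smul_perp
    (hcont : Int.gcd (Int.gcd (a 0 0) (a 1 0)) (Int.gcd (a 0 1) (a 1 1)) = 1) (ha : a.det ≠ 0)
    {l : ℤ} (hl : l ≠ 0) (hX₁ : 0 < X₁) (hX₂ : 0 < X₂) (hY₁ : 0 < Y₁) (hY₂ : 0 < Y₂)
    {F : Finset ((ℤ × ℤ) × (ℤ × ℤ))}
    (hF : ∀ p ∈ F, IsSolution a X₁ X₂ Y₁ Y₂ p ∧ vecMul₂ p.1 a = l • perp p.2) :
    (#F : ℝ) ≤ 8 * √(X₁ * X₂ * Y₁ * Y₂ / |(a.det : ℝ)|) + 4 := by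
  have huw : 8 * X₁ * X₂ / |(l : ℝ)| * (8 * Y₁ * Y₂ * |(l : ℝ)| / |(a.det : ℝ)|) =
      8 ^ 2 * (X₁ * X₂ * Y₁ * Y₂ / |(a.det : ℝ)|) := by
    have : (l : ℝ) ≠ 0 := by exact_mod_cast hl
    field_simp
  set u := 8 * X₁ * X₂ / |(l : ℝ)|
  set w := 8 * Y₁ * Y₂ * |(l : ℝ)| / |(a.det : ℝ)|
  calc (#F : ℝ) ≤ min u w + 4 := by
        rw [← min_add_add_right]
        exact le_min (card_le_of_forall_vecMul₂_eq_smul_perp_fst hcont hl hX₁ hX₂ hF)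
          (card_le_of_forall_vecMul₂_eq_smul_perp_snd hcont ha hl hY₁ hY₂ hF)
    _ ≤ √(u * w) + 4 := by gcongr; exact min_le_sqrt_mul (by positivity) (by positivity)
    _ = 8 * √(X₁ * X₂ * Y₁ * Y₂ / |(a.det : ℝ)|) + 4 := by
        rw [huw, Real.sqrt_mul (by positivity), Real.sqrt_sq (by norm_num)]

lemma card_le_of_isSolution_divisors
    (hcont : Int.gcd (Int.gcd (a 0 0) (a 1 0)) (Int.gcd (a 0 1) (a 1 1)) = 1) (ha : a.det ≠ 0)
    (hX₁ : 0 < X₁) (hX₂ : 0 < X₂) (hY₁ : 0 < Y₁) (hY₂ : 0 < Y₂)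
    {s : Finset ((ℤ × ℤ) × (ℤ × ℤ))} (hs : ∀ p ∈ s, IsSolution a X₁ X₂ Y₁ Y₂ p) :
    (#s : ℝ) ≤
      16 * (#a.det.natAbs.divisors * (√(X₁ * X₂ * Y₁ * Y₂ / |(a.det : ℝ)|) + 1)) := by
  classical
  set E := √(X₁ * X₂ * Y₁ * Y₂ / |(a.det : ℝ)|)
  set F : ℤ → Finset ((ℤ × ℤ) × (ℤ × ℤ)) := fun l ↦ s.filter fun p ↦ vecMul₂ p.1 a = l • perp p.2
  have hcover : s ⊆ a.det.divisors.biUnion F := fun p hp ↦ by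
    obtain ⟨-, -, -, -, hx, hy, h0⟩ := hs p hp
    obtain ⟨l, hl⟩ := exists_eq_smul_perp hy (by rw [dot₂_vecMul₂]; exact h0)
    exact mem_biUnion.mpr ⟨l, Int.mem_divisors.mpr ⟨dvd_det_of_vecMul₂_eq_smul hx hl, ha⟩,
      mem_filter.mpr ⟨hp, hl⟩⟩
  have hF : ∀ l ∈ a.det.divisors, (#(F l) : ℝ) ≤ 8 * E + 4 := fun l hl ↦
    card_le_of_forall_vecMul₂_eq_smul_perp hcont ha
      (ne_zero_of_dvd_ne_zero ha (Int.dvd_of_mem_divisors hl)) hX₁ hX₂ hY₁ hY₂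
      fun p hp ↦ ⟨hs p (mem_filter.mp hp).1, (mem_filter.mp hp).2⟩
  have hd : (0 : ℝ) ≤ #a.det.natAbs.divisors := Nat.cast_nonneg _
  calc (#s : ℝ) ≤ ∑ l ∈ a.det.divisors, (#(F l) : ℝ) := by
        exact_mod_cast (card_le_card hcover).trans card_biUnion_le
    _ ≤ ∑ l ∈ a.det.divisors, (8 * E + 4) := sum_le_sum hF
    _ = 2 * #a.det.natAbs.divisors * (8 * E + 4) := by
        rw [sum_const, nsmul_eq_mul, Int.card_divisors]; push_cast; ring
    _ ≤ 16 * (#a.det.natAbs.divisors * (E + 1)) := by nlinarith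

end Solutions

/-- There is an absolute constant `C > 0` such that for every 2×2 integer
matrix `a` with coprime entries and nonzero determinant `Δ`, and all `X₁,X₂,Y₁,Y₂ ≥ 1`,
the number of pairs of primitive integer vectors `(x,y)` in the box with `xᵀay = 0` is
at most `C · min{X₁X₂, Y₁Y₂, d(|Δ|)(√(X₁X₂Y₁Y₂/|Δ|) + 1)}`. -/
theorem stmt_1 : ∃ C : ℝ, 0 < C ∧
    ∀ (a : Matrix (Fin 2) (Fin 2) ℤ),
      Int.gcd (Int.gcd (a 0 0) (a 1 0)) (Int.gcd (a 0 1) (a 1 1)) = 1 →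
      a.det ≠ 0 →
      ∀ X₁ X₂ Y₁ Y₂ : ℝ, 1 ≤ X₁ → 1 ≤ X₂ → 1 ≤ Y₁ → 1 ≤ Y₂ →
      (Set.ncard {p : (ℤ × ℤ) × (ℤ × ℤ) |
          (|p.1.1| : ℝ) ≤ X₁ ∧ (|p.1.2| : ℝ) ≤ X₂ ∧
          (|p.2.1| : ℝ) ≤ Y₁ ∧ (|p.2.2| : ℝ) ≤ Y₂ ∧
          Int.gcd p.1.1 p.1.2 = 1 ∧ Int.gcd p.2.1 p.2.2 = 1 ∧
          a 0 0 * p.1.1 * p.2.1 + a 0 1 * p.1.1 * p.2.2 +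
            a 1 0 * p.1.2 * p.2.1 + a 1 1 * p.1.2 * p.2.2 = 0} : ℝ)
        ≤ C * min (X₁ * X₂) (min (Y₁ * Y₂)
            ((a.det.natAbs.divisors.card : ℝ) *
              (Real.sqrt (X₁ * X₂ * Y₁ * Y₂ / |(a.det : ℝ)|) + 1))) := by
  refine ⟨18, by norm_num, fun a hcont ha X₁ X₂ Y₁ Y₂ hX₁ hX₂ hY₁ hY₂ ↦ ?_⟩
  change (({p | IsSolution a X₁ X₂ Y₁ Y₂ p}).ncard : ℝ) ≤ _
  have hfin := finite_setOf_isSolution (a := a) (X₁ := X₁) (X₂ := X₂) (Y₁ := Y₁) (Y₂ := Y₂)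
  have hs : ∀ p ∈ hfin.toFinset, IsSolution a X₁ X₂ Y₁ Y₂ p := fun _ ↦ hfin.mem_toFinset.mp
  rw [Set.ncard_eq_toFinset_card _ hfin, mul_min_of_nonneg _ _ (by norm_num),
    mul_min_of_nonneg _ _ (by norm_num)]
  refine le_min (card_le_of_isSolution_fst ha hX₁ hX₂ hs)
    (le_min (card_le_of_isSolution_snd ha hY₁ hY₂ hs) ?_)
  refine (card_le_of_isSolution_divisors hcont ha (by linarith) (by linarith) (by linarith)
    (by linarith) hs).trans ?_
  gcongr
  norm_num
end

section
/- Fix an integer m ≥ 2. Let M = (m_{ij}) be an m×2 integer matrix and let q be a nonzero integer such that q divides every 2×2 minor of M, and such that no prime p dividing q divides all the entries of M. Then Λ_q = { v ∈ ℤ² : q divides every coordinate of Mv } is a sublattice (subgroup) of ℤ² of index [ℤ² : Λ_q] = |q|. -/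
/-!
Reduce modulo `n = |q|`: `Λ` is the preimage of the kernel `K` of `M mod n` acting on `(ℤ/n)²`,
so its index is `n² / |K|`. For each prime `p ∣ n` some row has an entry prime to `p`, so the row
space of `M mod n` has exponent `n`, and an element `s` of order `n` in it is unimodular:
`a s₀ + b s₁ = 1`. As all minors vanish mod `n`, `(s₁, -s₀)` lies in `K`, and unimodularity makes
`t ↦ t • (s₁, -s₀)` a bijection `ℤ/n ≃ K`.
-/

open Matrix

namespace Matrix

variable {R ι : Type*} [CommRing R] [Fintype ι]

theorem mulVec_rot_vecMul_eq_zero (A : Matrix ι (Fin 2) R)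
    (hA : ∀ i j, A i 0 * A j 1 - A i 1 * A j 0 = 0) (c : ι → R) :
    A *ᵥ ![(c ᵥ* A) 1, -(c ᵥ* A) 0] = 0 := by
  ext k
  have hsum : A k 0 * (c ᵥ* A) 1 - A k 1 * (c ᵥ* A) 0 =
      ∑ i, c i * (A k 0 * A i 1 - A k 1 * A i 0) := by
    simp only [vecMul, dotProduct, Finset.mul_sum, ← Finset.sum_sub_distrib]
    exact Finset.sum_congr rfl fun i _ => by ring
  simpa [mulVec, dotProduct, Fin.sum_univ_two, hA, ← sub_eq_add_neg] using hsum

theorem card_ker_mulVecLin_of_isCoprime (A : Matrix ι (Fin 2) R)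
    (hA : ∀ i j, A i 0 * A j 1 - A i 1 * A j 0 = 0) (c : ι → R)
    (hc : IsCoprime ((c ᵥ* A) 0) ((c ᵥ* A) 1)) :
    Nat.card (LinearMap.ker A.mulVecLin) = Nat.card R := by
  set s := c ᵥ* A
  obtain ⟨a, b, hab⟩ := hc
  let f : R →ₗ[R] LinearMap.ker A.mulVecLin :=
    (LinearMap.toSpanSingleton R _ ![s 1, -s 0]).codRestrict _ fun t =>
      Submodule.smul_mem _ t (mulVec_rot_vecMul_eq_zero A hA c)
  have hinj : Function.Injective f := by
    refine (injective_iff_map_eq_zero f).mpr fun t ht => ?_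
    have h : t • ![s 1, -s 0] = 0 := congrArg Subtype.val ht
    have h0 : t * s 1 = 0 := by simpa using congrFun h 0
    have h1 : t * s 0 = 0 := by simpa using congrFun h 1
    linear_combination -t * hab + a * h1 + b * h0
  have hsurj : Function.Surjective f := by
    rintro ⟨w, hw⟩
    have hsw : s 0 * w 0 + s 1 * w 1 = 0 := by
      have := dotProduct_mulVec c A w
      rw [LinearMap.mem_ker, mulVecLin_apply] at hw
      simpa [hw, dotProduct, Fin.sum_univ_two] using this.symm
    refine ⟨b * w 0 - a * w 1, Subtype.ext ?_⟩
    change (b * w 0 - a * w 1) • ![s 1, -s 0] = w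
    ext j
    fin_cases j
    · simp only [Fin.zero_eta, Pi.smul_apply, cons_val_zero, smul_eq_mul]
      linear_combination (-a) * hsw + w 0 * hab
    · simp only [Fin.mk_one, Pi.smul_apply, cons_val_one, cons_val_fin_one, smul_eq_mul]
      linear_combination (-b) * hsw + w 1 * hab
  exact Nat.card_congr (LinearEquiv.ofBijective f ⟨hinj, hsurj⟩).toEquiv.symm

end Matrix

namespace ZMod

theorem pow_dvd_addOrderOf_intCast_comp {κ : Type*} {n p k : ℕ} (hp : p.Prime)
    (hpk : p ^ k ∣ n) {v : κ → ℤ} {j : κ} (hj : ¬ (p : ℤ) ∣ v j) :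
    p ^ k ∣ addOrderOf (Int.cast ∘ v : κ → ZMod n) := by
  have hn : (n : ℤ) ∣ addOrderOf (Int.cast ∘ v : κ → ZMod n) * v j := by
    rw [← intCast_zmod_eq_zero_iff_dvd]
    simpa using congrFun (addOrderOf_nsmul_eq_zero (Int.cast ∘ v : κ → ZMod n)) j
  exact_mod_cast (Nat.prime_iff_prime_int.mp hp).pow_dvd_of_dvd_mul_right k hj
    ((Int.natCast_dvd_natCast.mpr hpk).trans hn)

theorem exists_addOrderOf_vecMul_map_intCast_eq {ι κ : Type*} [Fintype ι] (n : ℕ) [NeZero n]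
    (M : Matrix ι κ ℤ) (hM : ∀ p : ℕ, p.Prime → p ∣ n → ∃ i j, ¬ (p : ℤ) ∣ M i j) :
    ∃ c : ι → ZMod n, addOrderOf (c ᵥ* M.map (Int.cast : ℤ → ZMod n)) = n := by
  classical
  set S := (LinearMap.range (M.map (Int.cast : ℤ → ZMod n)).vecMulLinear).toAddSubgroup
  have hexp : AddMonoid.exponent S = n := by
    refine Nat.dvd_antisymm (AddMonoid.exponent_dvd_of_forall_nsmul_eq_zero fun g => ?_) ?_
    · ext j
      simp
    · refine (Nat.dvd_iff_prime_pow_dvd_dvd _ _).mpr fun p k hp hpk => ?_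
      rcases k.eq_zero_or_pos with rfl | hk
      · simp
      obtain ⟨i, j, hij⟩ := hM p hp ((dvd_pow_self p hk.ne').trans hpk)
      have hrow : (Int.cast ∘ M i : κ → ZMod n) ∈ S := ⟨Pi.single i 1, single_one_vecMul i _⟩
      calc p ^ k ∣ addOrderOf (⟨_, hrow⟩ : S) := by
            rw [← AddSubgroup.addOrderOf_coe]
            exact pow_dvd_addOrderOf_intCast_comp hp hpk hij
        _ ∣ AddMonoid.exponent S := AddMonoid.addOrder_dvd_exponent _
  obtain ⟨⟨_, c, rfl⟩, hc⟩ :=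
    AddMonoid.exists_addOrderOf_eq_exponent (AddMonoid.exponent_ne_zero.mp (hexp ▸ NeZero.ne n))
  exact ⟨c, (AddSubgroup.addOrderOf_coe _).trans (hc.trans hexp)⟩

theorem isCoprime_of_addOrderOf_eq {n : ℕ} [NeZero n] {s : Fin 2 → ZMod n}
    (hs : addOrderOf s = n) : IsCoprime (s 0) (s 1) := by
  set a := (s 0).val
  set b := (s 1).val
  set g := (a.gcd b).gcd n
  have hgn : g ∣ n := Nat.gcd_dvd_right _ _
  have hkill : (n / g) • s = 0 := by
    ext j
    obtain ⟨t, ht⟩ : g ∣ (s j).val := by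
      fin_cases j
      exacts [(Nat.gcd_dvd_left _ _).trans (Nat.gcd_dvd_left _ _),
        (Nat.gcd_dvd_left _ _).trans (Nat.gcd_dvd_right _ _)]
    rw [Pi.smul_apply, Pi.zero_apply, ← natCast_zmod_val (s j), ht, nsmul_eq_mul,
      ← Nat.cast_mul, ← mul_assoc, Nat.div_mul_cancel hgn, Nat.cast_mul, natCast_self,
      zero_mul]
  have hg : g = 1 := by
    have hdvd := addOrderOf_dvd_of_nsmul_eq_zero hkill
    rw [hs] at hdvd
    have := Nat.dvd_antisymm (Nat.div_dvd_of_dvd hgn) hdvd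
    exact (Nat.div_eq_self.mp this).resolve_left (NeZero.ne n)
  have hunit : IsUnit ((a.gcd b : ℕ) : ZMod n) := by
    simpa [isCoprime_zero_right] using
      (Nat.isCoprime_iff_coprime.mpr hg).map (Int.castRingHom (ZMod n))
  obtain ⟨u, hu⟩ := isUnit_iff_exists_inv.mp hunit
  have hbezout := congrArg (Int.cast : ℤ → ZMod n) (Nat.gcd_eq_gcd_ab a b)
  push_cast [a, b, natCast_zmod_val] at hbezout
  exact ⟨u * a.gcdA b, u * a.gcdB b, by linear_combination hu - u * hbezout⟩

end ZMod

theorem stmt_2_general (m : ℕ) (M : Matrix (Fin m) (Fin 2) ℤ)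
    (q : ℤ) (hq : q ≠ 0)
    (hminor : ∀ i j : Fin m, q ∣ M i 0 * M j 1 - M i 1 * M j 0)
    (hprim : ∀ p : ℕ, p.Prime → (p : ℤ) ∣ q → ∃ i j, ¬ (p : ℤ) ∣ M i j)
    (Λ : AddSubgroup (Fin 2 → ℤ))
    (hΛ : ∀ v, v ∈ Λ ↔ ∀ i, q ∣ M.mulVec v i) :
    Λ.index = q.natAbs := by
  set n := q.natAbs
  have : NeZero n := ⟨Int.natAbs_ne_zero.mpr hq⟩
  have hdvd (x : ℤ) : q ∣ x ↔ (x : ZMod n) = 0 := by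
    rw [ZMod.intCast_zmod_eq_zero_iff_dvd, Int.natAbs_dvd]
  set A := M.map (Int.cast : ℤ → ZMod n)
  set K := (LinearMap.ker A.mulVecLin).toAddSubgroup
  obtain ⟨c, hc⟩ := ZMod.exists_addOrderOf_vecMul_map_intCast_eq n M fun p hp hpn =>
    hprim p hp ((Int.natCast_dvd_natCast.mpr hpn).trans (Int.natAbs_dvd.mpr dvd_rfl))
  have hK : Nat.card K = n := by
    refine (card_ker_mulVecLin_of_isCoprime A (fun i j => ?_) c
      (ZMod.isCoprime_of_addOrderOf_eq hc)).trans (Nat.card_zmod n)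
    simpa [A] using (hdvd _).mp (hminor i j)
  have hΛK : Λ = K.comap ((Int.castAddHom (ZMod n)).compLeft (Fin 2)) := by
    ext v
    rw [hΛ, AddSubgroup.mem_comap, Submodule.mem_toAddSubgroup, LinearMap.mem_ker,
      mulVecLin_apply, funext_iff]
    refine forall_congr' fun i => ?_
    rw [hdvd, ← eq_intCast (Int.castRingHom _), RingHom.map_mulVec]
    rfl
  have hcard := K.index_mul_card
  rw [hK, Nat.card_fun, Nat.card_zmod, Nat.card_fin, sq] at hcard
  rw [hΛK, AddSubgroup.index_comap_of_surjective _ ZMod.intCast_surjective.comp_left]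
  exact Nat.eq_of_mul_eq_mul_right (NeZero.pos n) hcard

/-- For `m ≥ 2`, an `m×2` integer matrix `M`, and a nonzero integer `q`
dividing every 2×2 minor of `M`, such that no prime dividing `q` divides all entries
of `M`, the subgroup `Λ_q = {v ∈ ℤ² : q ∣ Mv}` of `ℤ²` has index `|q|`. -/
theorem stmt_2 (m : ℕ) (hm : 2 ≤ m) (M : Matrix (Fin m) (Fin 2) ℤ)
    (q : ℤ) (hq : q ≠ 0)
    (hminor : ∀ i j : Fin m, q ∣ M i 0 * M j 1 - M i 1 * M j 0)
    (hprim : ∀ p : ℕ, p.Prime → (p : ℤ) ∣ q → ∃ i j, ¬ (p : ℤ) ∣ M i j)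
    (Λ : AddSubgroup (Fin 2 → ℤ))
    (hΛ : ∀ v, v ∈ Λ ↔ ∀ i, q ∣ M.mulVec v i) :
    Λ.index = q.natAbs :=
  stmt_2_general m M q hq hminor hprim Λ hΛ
end

section
/- Let A = (a_{ijk}) be a 2×2×2 integer hypermatrix. If the binary quadratic form Δ_xy vanishes identically (i.e., all three of its coefficients are zero), then Δ_yz vanishes identically or Δ_zx vanishes identically. -/
/-- For a 2×2×2 integer hypermatrix, if the binary quadratic form `Δ_xy`
vanishes identically (all three coefficients zero), then `Δ_yz` or `Δ_zx` also vanishes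
identically. -/
theorem stmt_5 (a111 a112 a121 a122 a211 a212 a221 a222 : ℤ)
    (h1 : a111 * a221 - a121 * a211 = 0)
    (h2 : a111 * a222 + a112 * a221 - a212 * a121 - a211 * a122 = 0)
    (h3 : a112 * a222 - a122 * a212 = 0) :
    (a111 * a122 - a112 * a121 = 0 ∧
     a111 * a222 + a211 * a122 - a112 * a221 - a212 * a121 = 0 ∧
     a211 * a222 - a212 * a221 = 0) ∨
    (a111 * a212 - a112 * a211 = 0 ∧
     a111 * a222 + a212 * a121 - a112 * a221 - a211 * a122 = 0 ∧
     a121 * a222 - a122 * a221 = 0) := by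
  set a := a111; set b := a112; set c := a121; set d := a122
  set e := a211; set f := a212; set g := a221; set h := a222
  have pq11 : (a*d - b*c) * (a*f - b*e) = 0 := by linear_combination (-(b*b)) * h1 + (a*b) * h2 + (-(a*a)) * h3
  have pq12 : (a*d - b*c) * (a*h + f*c - b*g - e*d) = 0 := by linear_combination (-2*b*d) * h1 + (a*d + b*c) * h2 + (-2*a*c) * h3
  have pq13 : (a*d - b*c) * (c*h - d*g) = 0 := by linear_combination (-(d*d)) * h1 + (c*d) * h2 + (-(c*c)) * h3
  have pq21 : (a*h + e*d - b*g - f*c) * (a*f - b*e) = 0 := by linear_combination (-2*b*f) * h1 + (a*f + b*e) * h2 + (-2*a*e) * h3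
  have pq22 : (a*h + e*d - b*g - f*c) * (a*h + f*c - b*g - e*d) = 0 := by linear_combination (-4*d*f) * h1 + (a*h + b*g + c*f + d*e) * h2 + (-4*a*g) * h3
  have pq23 : (a*h + e*d - b*g - f*c) * (c*h - d*g) = 0 := by linear_combination (-2*d*h) * h1 + (c*h + d*g) * h2 + (-2*c*g) * h3
  have pq31 : (e*h - f*g) * (a*f - b*e) = 0 := by linear_combination (-(f*f)) * h1 + (e*f) * h2 + (-(e*e)) * h3
  have pq32 : (e*h - f*g) * (a*h + f*c - b*g - e*d) = 0 := by linear_combination (-2*f*h) * h1 + (e*h + f*g) * h2 + (-2*e*g) * h3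
  have pq33 : (e*h - f*g) * (c*h - d*g) = 0 := by linear_combination (-(h*h)) * h1 + (g*h) * h2 + (-(g*g)) * h3
  by_cases hp1 : a*d - b*c = 0
  · by_cases hp2 : a*h + e*d - b*g - f*c = 0
    · by_cases hp3 : e*h - f*g = 0
      · exact Or.inl ⟨hp1, hp2, hp3⟩
      · exact Or.inr ⟨(mul_eq_zero.mp pq31).resolve_left hp3,
          (mul_eq_zero.mp pq32).resolve_left hp3,
          (mul_eq_zero.mp pq33).resolve_left hp3⟩
    · exact Or.inr ⟨(mul_eq_zero.mp pq21).resolve_left hp2,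
        (mul_eq_zero.mp pq22).resolve_left hp2,
        (mul_eq_zero.mp pq23).resolve_left hp2⟩
  · exact Or.inr ⟨(mul_eq_zero.mp pq11).resolve_left hp1,
      (mul_eq_zero.mp pq12).resolve_left hp1,
      (mul_eq_zero.mp pq13).resolve_left hp1⟩
end

section
/- Let A = (a_{ijk}) be a 2×2×2 integer hypermatrix with associated trilinear form f(x,y,z) = Σ_{i,j,k} a_{ijk} x_i y_j z_k. If the binary quadratic forms Δ_xy and Δ_yz both vanish identically, then f factorizes over ℚ as f(x,y,z) = L(y)·B(x,z), where L(y) = l₁y₁ + l₂y₂ is a linear form and B(x,z) = Σ_{i,k} b_{ik} x_i z_k is a bilinear form, both with rational coefficients. Furthermore, Δ_zx(y) = det(b_{ik})·L(y)² as polynomials in y₁, y₂. -/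
open MvPolynomial

lemma key6 (a111 a112 a121 a122 a211 a212 a221 a222 : ℤ)
    (f : MvPolynomial (Fin 6) ℚ)
    (hf : f = C (a111 : ℚ) * X 0 * X 2 * X 4 + C (a112 : ℚ) * X 0 * X 2 * X 5 +
              C (a121 : ℚ) * X 0 * X 3 * X 4 + C (a122 : ℚ) * X 0 * X 3 * X 5 +
              C (a211 : ℚ) * X 1 * X 2 * X 4 + C (a212 : ℚ) * X 1 * X 2 * X 5 +
              C (a221 : ℚ) * X 1 * X 3 * X 4 + C (a222 : ℚ) * X 1 * X 3 * X 5)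
    (l₁ l₂ : ℚ) (b : Matrix (Fin 2) (Fin 2) ℚ)
    (e111 : (a111 : ℚ) = l₁ * b 0 0) (e112 : (a112 : ℚ) = l₁ * b 0 1)
    (e211 : (a211 : ℚ) = l₁ * b 1 0) (e212 : (a212 : ℚ) = l₁ * b 1 1)
    (e121 : (a121 : ℚ) = l₂ * b 0 0) (e122 : (a122 : ℚ) = l₂ * b 0 1)
    (e221 : (a221 : ℚ) = l₂ * b 1 0) (e222 : (a222 : ℚ) = l₂ * b 1 1) :
    f = (C l₁ * X 2 + C l₂ * X 3) *
            (C (b 0 0) * X 0 * X 4 + C (b 0 1) * X 0 * X 5 +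
             C (b 1 0) * X 1 * X 4 + C (b 1 1) * X 1 * X 5) ∧
      (C ((a111 * a212 - a112 * a211 : ℤ) : ℚ) * X 0 ^ 2 +
         C ((a111 * a222 + a212 * a121 - a112 * a221 - a211 * a122 : ℤ) : ℚ) * X 0 * X 1 +
         C ((a121 * a222 - a122 * a221 : ℤ) : ℚ) * X 1 ^ 2
           : MvPolynomial (Fin 2) ℚ)
        = C b.det * (C l₁ * X 0 + C l₂ * X 1) ^ 2 := by
  constructor
  · rw [hf, e111, e112, e211, e212, e121, e122, e221, e222]
    simp only [map_mul, map_add, map_sub]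
    ring
  · rw [Matrix.det_fin_two]
    push_cast
    rw [e111, e112, e211, e212, e121, e122, e221, e222]
    simp only [map_mul, map_add, map_sub, map_pow]
    ring

/-- For a 2×2×2 integer hypermatrix with trilinear form `f` (in
`ℚ[x₁,x₂,y₁,y₂,z₁,z₂]`, variables `X 0,X 1 = x`, `X 2,X 3 = y`, `X 4,X 5 = z`), if
`Δ_xy` and `Δ_yz` vanish identically then `f = L(y)·B(x,z)` over `ℚ` for a linear form
`L` and a bilinear form `B`, and moreover `Δ_zx(y) = det(B)·L(y)²` as polynomials in
`y₁,y₂`. -/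
theorem stmt_6 (a111 a112 a121 a122 a211 a212 a221 a222 : ℤ)
    (f : MvPolynomial (Fin 6) ℚ)
    (hf : f = C (a111 : ℚ) * X 0 * X 2 * X 4 + C (a112 : ℚ) * X 0 * X 2 * X 5 +
              C (a121 : ℚ) * X 0 * X 3 * X 4 + C (a122 : ℚ) * X 0 * X 3 * X 5 +
              C (a211 : ℚ) * X 1 * X 2 * X 4 + C (a212 : ℚ) * X 1 * X 2 * X 5 +
              C (a221 : ℚ) * X 1 * X 3 * X 4 + C (a222 : ℚ) * X 1 * X 3 * X 5)
    (hxy1 : a111 * a221 - a121 * a211 = 0)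
    (hxy2 : a111 * a222 + a112 * a221 - a212 * a121 - a211 * a122 = 0)
    (hxy3 : a112 * a222 - a122 * a212 = 0)
    (hyz1 : a111 * a122 - a112 * a121 = 0)
    (hyz2 : a111 * a222 + a211 * a122 - a112 * a221 - a212 * a121 = 0)
    (hyz3 : a211 * a222 - a212 * a221 = 0) :
    ∃ (l₁ l₂ : ℚ) (b : Matrix (Fin 2) (Fin 2) ℚ),
      f = (C l₁ * X 2 + C l₂ * X 3) *
            (C (b 0 0) * X 0 * X 4 + C (b 0 1) * X 0 * X 5 +
             C (b 1 0) * X 1 * X 4 + C (b 1 1) * X 1 * X 5) ∧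
      (C ((a111 * a212 - a112 * a211 : ℤ) : ℚ) * X 0 ^ 2 +
         C ((a111 * a222 + a212 * a121 - a112 * a221 - a211 * a122 : ℤ) : ℚ) * X 0 * X 1 +
         C ((a121 * a222 - a122 * a221 : ℤ) : ℚ) * X 1 ^ 2
           : MvPolynomial (Fin 2) ℚ)
        = C b.det * (C l₁ * X 0 + C l₂ * X 1) ^ 2 := by
  have q1 : (a111 : ℚ) * a221 - a121 * a211 = 0 := by exact_mod_cast hxy1
  have q2 : (a111 : ℚ) * a222 + a112 * a221 - a212 * a121 - a211 * a122 = 0 := by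
    exact_mod_cast hxy2
  have q3 : (a112 : ℚ) * a222 - a122 * a212 = 0 := by exact_mod_cast hxy3
  have q4 : (a111 : ℚ) * a122 - a112 * a121 = 0 := by exact_mod_cast hyz1
  have q5 : (a111 : ℚ) * a222 + a211 * a122 - a112 * a221 - a212 * a121 = 0 := by
    exact_mod_cast hyz2
  have q6 : (a211 : ℚ) * a222 - a212 * a221 = 0 := by exact_mod_cast hyz3
  by_cases ha111 : (a111 : ℚ) ≠ 0
  · refine ⟨1, (a121 : ℚ) / a111, !![(a111 : ℚ), a112; a211, a212],
      key6 _ _ _ _ _ _ _ _ _ hf _ _ _ ?_ ?_ ?_ ?_ ?_ ?_ ?_ ?_⟩ <;>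
      simp only [Matrix.cons_val', Matrix.cons_val_zero, Matrix.cons_val_one,
        Matrix.head_cons, Matrix.head_fin_const, Matrix.empty_val', Matrix.cons_val_fin_one,
        Matrix.of_apply]
    · ring
    · ring
    · ring
    · ring
    · field_simp
    · field_simp; linear_combination q4
    · field_simp; linear_combination q1
    · field_simp; linear_combination (q2+q5)/2
  by_cases ha112 : (a112 : ℚ) ≠ 0
  · refine ⟨1, (a122 : ℚ) / a112, !![(a111 : ℚ), a112; a211, a212],
      key6 _ _ _ _ _ _ _ _ _ hf _ _ _ ?_ ?_ ?_ ?_ ?_ ?_ ?_ ?_⟩ <;>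
      simp only [Matrix.cons_val', Matrix.cons_val_zero, Matrix.cons_val_one,
        Matrix.head_cons, Matrix.head_fin_const, Matrix.empty_val', Matrix.cons_val_fin_one,
        Matrix.of_apply]
    · ring
    · ring
    · ring
    · ring
    · field_simp; linear_combination -q4
    · field_simp
    · field_simp; linear_combination (q2-q5)/2
    · field_simp; linear_combination q3
  by_cases ha211 : (a211 : ℚ) ≠ 0
  · refine ⟨1, (a221 : ℚ) / a211, !![(a111 : ℚ), a112; a211, a212],
      key6 _ _ _ _ _ _ _ _ _ hf _ _ _ ?_ ?_ ?_ ?_ ?_ ?_ ?_ ?_⟩ <;>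
      simp only [Matrix.cons_val', Matrix.cons_val_zero, Matrix.cons_val_one,
        Matrix.head_cons, Matrix.head_fin_const, Matrix.empty_val', Matrix.cons_val_fin_one,
        Matrix.of_apply]
    · ring
    · ring
    · ring
    · ring
    · field_simp; linear_combination -q1
    · field_simp; linear_combination (q5-q2)/2
    · field_simp
    · field_simp; linear_combination q6
  by_cases ha212 : (a212 : ℚ) ≠ 0
  · refine ⟨1, (a222 : ℚ) / a212, !![(a111 : ℚ), a112; a211, a212],
      key6 _ _ _ _ _ _ _ _ _ hf _ _ _ ?_ ?_ ?_ ?_ ?_ ?_ ?_ ?_⟩ <;>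
      simp only [Matrix.cons_val', Matrix.cons_val_zero, Matrix.cons_val_one,
        Matrix.head_cons, Matrix.head_fin_const, Matrix.empty_val', Matrix.cons_val_fin_one,
        Matrix.of_apply]
    · ring
    · ring
    · ring
    · ring
    · field_simp; linear_combination -(q2+q5)/2
    · field_simp; linear_combination -q3
    · field_simp; linear_combination -q6
    · field_simp
  push_neg at ha111
  push_neg at ha112
  push_neg at ha211
  push_neg at ha212
  refine ⟨0, 1, !![(a121 : ℚ), a122; a221, a222],
      key6 _ _ _ _ _ _ _ _ _ hf _ _ _ ?_ ?_ ?_ ?_ ?_ ?_ ?_ ?_⟩ <;>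
      simp only [Matrix.cons_val', Matrix.cons_val_zero, Matrix.cons_val_one,
        Matrix.head_cons, Matrix.head_fin_const, Matrix.empty_val', Matrix.cons_val_fin_one,
        Matrix.of_apply] <;>
      simp [ha111, ha112, ha211, ha212]
end

section
/- Let A = (a_{ijk}) be a 2×2×2 integer hypermatrix with associated trilinear form f(x,y,z) = Σ_{i,j,k} a_{ijk} x_i y_j z_k. Then f splits over ℚ as a product of three linear forms, f(x,y,z) = (u₁x₁+u₂x₂)(v₁y₁+v₂y₂)(w₁z₁+w₂z₂) for some rationals u_i, v_j, w_k, if and only if the binary quadratic forms Δ_xy, Δ_yz and Δ_zx all vanish identically. -/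
open MvPolynomial

private lemma intkey (x : ℤ) (hx : (x : ℚ) = 0) : x = 0 := by exact_mod_cast hx

private lemma vec5 (x0 x1 x2 x3 x4 x5 : ℚ) :
    (![x0, x1, x2, x3, x4, x5] : Fin 6 → ℚ) 5 = x5 := rfl

private lemma vec4 (x0 x1 x2 x3 x4 x5 : ℚ) :
    (![x0, x1, x2, x3, x4, x5] : Fin 6 → ℚ) 4 = x4 := rfl

private lemma split_aux (b111 b112 b121 b122 b211 b212 b221 b222 : ℚ)
    (f : MvPolynomial (Fin 6) ℚ)
    (hf : f = C b111 * X 0 * X 2 * X 4 + C b112 * X 0 * X 2 * X 5 +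
              C b121 * X 0 * X 3 * X 4 + C b122 * X 0 * X 3 * X 5 +
              C b211 * X 1 * X 2 * X 4 + C b212 * X 1 * X 2 * X 5 +
              C b221 * X 1 * X 3 * X 4 + C b222 * X 1 * X 3 * X 5)
    (t U1 U2 V1 V2 W1 W2 : ℚ) (ht : t ≠ 0)
    (h111 : t * b111 = U1 * V1 * W1) (h112 : t * b112 = U1 * V1 * W2)
    (h121 : t * b121 = U1 * V2 * W1) (h122 : t * b122 = U1 * V2 * W2)
    (h211 : t * b211 = U2 * V1 * W1) (h212 : t * b212 = U2 * V1 * W2)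
    (h221 : t * b221 = U2 * V2 * W1) (h222 : t * b222 = U2 * V2 * W2) :
    ∃ u₁ u₂ v₁ v₂ w₁ w₂ : ℚ,
      f = (C u₁ * X 0 + C u₂ * X 1) * (C v₁ * X 2 + C v₂ * X 3) *
            (C w₁ * X 4 + C w₂ * X 5) := by
  refine ⟨U1 * t⁻¹, U2 * t⁻¹, V1, V2, W1, W2, ?_⟩
  have d : ∀ b U V W : ℚ, t * b = U * V * W →
      (C b : MvPolynomial (Fin 6) ℚ) = C t⁻¹ * (C U * C V * C W) := by
    intro b U V W h
    rw [← map_mul, ← map_mul, ← map_mul, ← h, inv_mul_cancel_left₀ ht]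
  rw [hf, d _ _ _ _ h111, d _ _ _ _ h112, d _ _ _ _ h121, d _ _ _ _ h122,
      d _ _ _ _ h211, d _ _ _ _ h212, d _ _ _ _ h221, d _ _ _ _ h222]
  simp only [map_mul]
  ring

set_option maxHeartbeats 4000000 in
/-- The trilinear form `f` of a 2×2×2 integer hypermatrix (viewed in
`ℚ[x₁,x₂,y₁,y₂,z₁,z₂]`, variables `X 0,X 1 = x`, `X 2,X 3 = y`, `X 4,X 5 = z`) splits
over `ℚ` as a product of three linear forms iff the binary quadratic forms `Δ_xy`,
`Δ_yz` and `Δ_zx` all vanish identically. -/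
theorem stmt_8 (a111 a112 a121 a122 a211 a212 a221 a222 : ℤ)
    (f : MvPolynomial (Fin 6) ℚ)
    (hf : f = C (a111 : ℚ) * X 0 * X 2 * X 4 + C (a112 : ℚ) * X 0 * X 2 * X 5 +
              C (a121 : ℚ) * X 0 * X 3 * X 4 + C (a122 : ℚ) * X 0 * X 3 * X 5 +
              C (a211 : ℚ) * X 1 * X 2 * X 4 + C (a212 : ℚ) * X 1 * X 2 * X 5 +
              C (a221 : ℚ) * X 1 * X 3 * X 4 + C (a222 : ℚ) * X 1 * X 3 * X 5) :
    (∃ u₁ u₂ v₁ v₂ w₁ w₂ : ℚ,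
        f = (C u₁ * X 0 + C u₂ * X 1) * (C v₁ * X 2 + C v₂ * X 3) *
              (C w₁ * X 4 + C w₂ * X 5)) ↔
    ((a111 * a221 - a121 * a211 = 0 ∧
      a111 * a222 + a112 * a221 - a212 * a121 - a211 * a122 = 0 ∧
      a112 * a222 - a122 * a212 = 0) ∧
     (a111 * a122 - a112 * a121 = 0 ∧
      a111 * a222 + a211 * a122 - a112 * a221 - a212 * a121 = 0 ∧
      a211 * a222 - a212 * a221 = 0) ∧
     (a111 * a212 - a112 * a211 = 0 ∧
      a111 * a222 + a212 * a121 - a112 * a221 - a211 * a122 = 0 ∧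
      a121 * a222 - a122 * a221 = 0)) := by
  constructor
  · rintro ⟨u1, u2, v1, v2, w1, w2, h⟩
    rw [hf] at h
    have E111 : (a111 : ℚ) = u1 * v1 * w1 := by
      have h' := h
      apply_fun (eval (![1, 0, 1, 0, 1, 0] : Fin 6 → ℚ)) at h'
      simp [vec4, vec5] at h'
      linear_combination h'
    have E112 : (a112 : ℚ) = u1 * v1 * w2 := by
      have h' := h
      apply_fun (eval (![1, 0, 1, 0, 0, 1] : Fin 6 → ℚ)) at h'
      simp [vec4, vec5] at h'
      linear_combination h'
    have E121 : (a121 : ℚ) = u1 * v2 * w1 := by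
      have h' := h
      apply_fun (eval (![1, 0, 0, 1, 1, 0] : Fin 6 → ℚ)) at h'
      simp [vec4, vec5] at h'
      linear_combination h'
    have E122 : (a122 : ℚ) = u1 * v2 * w2 := by
      have h' := h
      apply_fun (eval (![1, 0, 0, 1, 0, 1] : Fin 6 → ℚ)) at h'
      simp [vec4, vec5] at h'
      linear_combination h'
    have E211 : (a211 : ℚ) = u2 * v1 * w1 := by
      have h' := h
      apply_fun (eval (![0, 1, 1, 0, 1, 0] : Fin 6 → ℚ)) at h'
      simp [vec4, vec5] at h'
      linear_combination h'
    have E212 : (a212 : ℚ) = u2 * v1 * w2 := by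
      have h' := h
      apply_fun (eval (![0, 1, 1, 0, 0, 1] : Fin 6 → ℚ)) at h'
      simp [vec4, vec5] at h'
      linear_combination h'
    have E221 : (a221 : ℚ) = u2 * v2 * w1 := by
      have h' := h
      apply_fun (eval (![0, 1, 0, 1, 1, 0] : Fin 6 → ℚ)) at h'
      simp [vec4, vec5] at h'
      linear_combination h'
    have E222 : (a222 : ℚ) = u2 * v2 * w2 := by
      have h' := h
      apply_fun (eval (![0, 1, 0, 1, 0, 1] : Fin 6 → ℚ)) at h'
      simp [vec4, vec5] at h'
      linear_combination h'
    refine ⟨⟨intkey _ ?_, intkey _ ?_, intkey _ ?_⟩, ⟨intkey _ ?_, intkey _ ?_, intkey _ ?_⟩, ⟨intkey _ ?_, intkey _ ?_, intkey _ ?_⟩⟩ <;>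
    · push_cast
      simp only [E111, E112, E121, E122, E211, E212, E221, E222]
      ring
  · rintro ⟨⟨r1, r2, r3⟩, ⟨r4, r5, r6⟩, ⟨r7, r8, r9⟩⟩
    have q1 : (a111:ℚ) * a221 - a121 * a211 = 0 := by exact_mod_cast r1
    have q2 : (a111:ℚ) * a222 + a112 * a221 - a212 * a121 - a211 * a122 = 0 := by exact_mod_cast r2
    have q3 : (a112:ℚ) * a222 - a122 * a212 = 0 := by exact_mod_cast r3
    have q4 : (a111:ℚ) * a122 - a112 * a121 = 0 := by exact_mod_cast r4
    have q5 : (a111:ℚ) * a222 + a211 * a122 - a112 * a221 - a212 * a121 = 0 := by exact_mod_cast r5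
    have q6 : (a211:ℚ) * a222 - a212 * a221 = 0 := by exact_mod_cast r6
    have q7 : (a111:ℚ) * a212 - a112 * a211 = 0 := by exact_mod_cast r7
    have q8 : (a111:ℚ) * a222 + a212 * a121 - a112 * a221 - a211 * a122 = 0 := by exact_mod_cast r8
    have q9 : (a121:ℚ) * a222 - a122 * a221 = 0 := by exact_mod_cast r9
    rcases eq_or_ne a111 0 with hz111 | h111
    swap
    · -- pivot a111 ≠ 0
      have hne : (a111 : ℚ) ≠ 0 := Int.cast_ne_zero.mpr h111
      refine split_aux ((a111 : ℚ)) ((a112 : ℚ)) ((a121 : ℚ)) ((a122 : ℚ)) ((a211 : ℚ)) ((a212 : ℚ)) ((a221 : ℚ)) ((a222 : ℚ)) f hf ((a111:ℚ)^2) (a111:ℚ) (a211:ℚ) (a111:ℚ) (a121:ℚ) (a111:ℚ) (a112:ℚ) (pow_ne_zero 2 hne) ?_ ?_ ?_ ?_ ?_ ?_ ?_ ?_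
      · ring
      · ring
      · ring
      · linear_combination (a111 : ℚ) * q4
      · ring
      · linear_combination (a111 : ℚ) * q7
      · linear_combination (a111 : ℚ) * q1
      · linear_combination -(a112 : ℚ) * q1 + (a111 : ℚ) * q2 + (a211 : ℚ) * q4 + (a121 : ℚ) * q7
    rcases eq_or_ne a112 0 with hz112 | h112
    swap
    · -- pivot a112 ≠ 0
      have hne : (a112 : ℚ) ≠ 0 := Int.cast_ne_zero.mpr h112
      refine split_aux ((a111 : ℚ)) ((a112 : ℚ)) ((a121 : ℚ)) ((a122 : ℚ)) ((a211 : ℚ)) ((a212 : ℚ)) ((a221 : ℚ)) ((a222 : ℚ)) f hf ((a112:ℚ)^2) (a112:ℚ) (a212:ℚ) (a112:ℚ) (a122:ℚ) (a111:ℚ) (a112:ℚ) (pow_ne_zero 2 hne) ?_ ?_ ?_ ?_ ?_ ?_ ?_ ?_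
      · ring
      · ring
      · linear_combination -(a112 : ℚ) * q4
      · ring
      · linear_combination -(a112 : ℚ) * q7
      · ring
      · linear_combination (a112 : ℚ) * q2 - (a111 : ℚ) * q3 - (a212 : ℚ) * q4 - (a122 : ℚ) * q7
      · linear_combination (a112 : ℚ) * q3
    rcases eq_or_ne a121 0 with hz121 | h121
    swap
    · -- pivot a121 ≠ 0
      have hne : (a121 : ℚ) ≠ 0 := Int.cast_ne_zero.mpr h121
      refine split_aux ((a111 : ℚ)) ((a112 : ℚ)) ((a121 : ℚ)) ((a122 : ℚ)) ((a211 : ℚ)) ((a212 : ℚ)) ((a221 : ℚ)) ((a222 : ℚ)) f hf ((a121:ℚ)^2) (a121:ℚ) (a221:ℚ) (a111:ℚ) (a121:ℚ) (a121:ℚ) (a122:ℚ) (pow_ne_zero 2 hne) ?_ ?_ ?_ ?_ ?_ ?_ ?_ ?_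
      · ring
      · linear_combination -(a121 : ℚ) * q4
      · ring
      · ring
      · linear_combination -(a121 : ℚ) * q1
      · linear_combination ((-1/2 : ℚ) * (a121 : ℚ)) * q2 - (a221 : ℚ) * q4 + ((1/2 : ℚ) * (a121 : ℚ)) * q8
      · ring
      · linear_combination (a121 : ℚ) * q9
    rcases eq_or_ne a122 0 with hz122 | h122
    swap
    · -- pivot a122 ≠ 0
      have hne : (a122 : ℚ) ≠ 0 := Int.cast_ne_zero.mpr h122
      refine split_aux ((a111 : ℚ)) ((a112 : ℚ)) ((a121 : ℚ)) ((a122 : ℚ)) ((a211 : ℚ)) ((a212 : ℚ)) ((a221 : ℚ)) ((a222 : ℚ)) f hf ((a122:ℚ)^2) (a122:ℚ) (a222:ℚ) (a112:ℚ) (a122:ℚ) (a121:ℚ) (a122:ℚ) (pow_ne_zero 2 hne) ?_ ?_ ?_ ?_ ?_ ?_ ?_ ?_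
      · linear_combination (a122 : ℚ) * q4
      · ring
      · ring
      · ring
      · linear_combination ((-1/2 : ℚ) * (a122 : ℚ)) * q2 + (a222 : ℚ) * q4 + ((-1/2 : ℚ) * (a122 : ℚ)) * q8
      · linear_combination -(a122 : ℚ) * q3
      · linear_combination -(a122 : ℚ) * q9
      · ring
    rcases eq_or_ne a211 0 with hz211 | h211
    swap
    · -- pivot a211 ≠ 0
      have hne : (a211 : ℚ) ≠ 0 := Int.cast_ne_zero.mpr h211
      refine split_aux ((a111 : ℚ)) ((a112 : ℚ)) ((a121 : ℚ)) ((a122 : ℚ)) ((a211 : ℚ)) ((a212 : ℚ)) ((a221 : ℚ)) ((a222 : ℚ)) f hf ((a211:ℚ)^2) (a111:ℚ) (a211:ℚ) (a211:ℚ) (a221:ℚ) (a211:ℚ) (a212:ℚ) (pow_ne_zero 2 hne) ?_ ?_ ?_ ?_ ?_ ?_ ?_ ?_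
      · ring
      · linear_combination -(a211 : ℚ) * q7
      · linear_combination -(a211 : ℚ) * q1
      · linear_combination ((-1/2 : ℚ) * (a211 : ℚ)) * q2 + ((1/2 : ℚ) * (a211 : ℚ)) * q5 - (a221 : ℚ) * q7
      · ring
      · ring
      · ring
      · linear_combination (a211 : ℚ) * q6
    rcases eq_or_ne a212 0 with hz212 | h212
    swap
    · -- pivot a212 ≠ 0
      have hne : (a212 : ℚ) ≠ 0 := Int.cast_ne_zero.mpr h212
      refine split_aux ((a111 : ℚ)) ((a112 : ℚ)) ((a121 : ℚ)) ((a122 : ℚ)) ((a211 : ℚ)) ((a212 : ℚ)) ((a221 : ℚ)) ((a222 : ℚ)) f hf ((a212:ℚ)^2) (a112:ℚ) (a212:ℚ) (a212:ℚ) (a222:ℚ) (a211:ℚ) (a212:ℚ) (pow_ne_zero 2 hne) ?_ ?_ ?_ ?_ ?_ ?_ ?_ ?_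
      · linear_combination (a212 : ℚ) * q7
      · ring
      · linear_combination ((-1/2 : ℚ) * (a212 : ℚ)) * q2 + ((-1/2 : ℚ) * (a212 : ℚ)) * q5 + (a222 : ℚ) * q7
      · linear_combination -(a212 : ℚ) * q3
      · ring
      · ring
      · linear_combination -(a212 : ℚ) * q6
      · ring
    rcases eq_or_ne a221 0 with hz221 | h221
    swap
    · -- pivot a221 ≠ 0
      have hne : (a221 : ℚ) ≠ 0 := Int.cast_ne_zero.mpr h221
      refine split_aux ((a111 : ℚ)) ((a112 : ℚ)) ((a121 : ℚ)) ((a122 : ℚ)) ((a211 : ℚ)) ((a212 : ℚ)) ((a221 : ℚ)) ((a222 : ℚ)) f hf ((a221:ℚ)^2) (a121:ℚ) (a221:ℚ) (a211:ℚ) (a221:ℚ) (a221:ℚ) (a222:ℚ) (pow_ne_zero 2 hne) ?_ ?_ ?_ ?_ ?_ ?_ ?_ ?_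
      · linear_combination (a221 : ℚ) * q1
      · linear_combination (a222 : ℚ) * q1 + ((-1/2 : ℚ) * (a221 : ℚ)) * q5 + ((-1/2 : ℚ) * (a221 : ℚ)) * q8
      · ring
      · linear_combination -(a221 : ℚ) * q9
      · ring
      · linear_combination -(a221 : ℚ) * q6
      · ring
      · ring
    rcases eq_or_ne a222 0 with hz222 | h222
    swap
    · -- pivot a222 ≠ 0
      have hne : (a222 : ℚ) ≠ 0 := Int.cast_ne_zero.mpr h222
      refine split_aux ((a111 : ℚ)) ((a112 : ℚ)) ((a121 : ℚ)) ((a122 : ℚ)) ((a211 : ℚ)) ((a212 : ℚ)) ((a221 : ℚ)) ((a222 : ℚ)) f hf ((a222:ℚ)^2) (a122:ℚ) (a222:ℚ) (a212:ℚ) (a222:ℚ) (a221:ℚ) (a222:ℚ) (pow_ne_zero 2 hne) ?_ ?_ ?_ ?_ ?_ ?_ ?_ ?_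
      · linear_combination (a221 : ℚ) * q3 + ((1/2 : ℚ) * (a222 : ℚ)) * q5 + ((1/2 : ℚ) * (a222 : ℚ)) * q8
      · linear_combination (a222 : ℚ) * q3
      · linear_combination (a222 : ℚ) * q9
      · ring
      · linear_combination (a222 : ℚ) * q6
      · ring
      · ring
      · ring
    refine ⟨0, 0, 0, 0, 0, 0, ?_⟩
    rw [hf, hz111, hz112, hz121, hz122, hz211, hz212, hz221, hz222]
    simp
end

section
/- Let A = (a_{ijk}) be a 2×2×2 integer hypermatrix with hyperdeterminant D and associated trilinear form f(x,y,z) = Σ_{i,j,k} a_{ijk} x_i y_j z_k. Then D = 0 if and only if there exist nonzero vectors x, y, z ∈ ℂ² such that all six partial derivatives of f vanish at (x,y,z); that is, Σ_{j,k} a_{ijk} y_j z_k = 0 for i = 1,2, Σ_{i,k} a_{ijk} x_i z_k = 0 for j = 1,2, and Σ_{i,j} a_{ijk} x_i y_j = 0 for k = 1,2. -/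
private lemma cancel3 {a b c d : ℂ} (ha : a ≠ 0) (hb : b ≠ 0) (hc : c ≠ 0)
    (h : a * b * c * d = 0) : d = 0 := by
  rcases mul_eq_zero.mp h with h' | h'
  · exact absurd h' (mul_ne_zero (mul_ne_zero ha hb) hc)
  · exact h'

private lemma key_exists (a111 a112 a121 a122 a211 a212 a221 a222 z1 z2 : ℂ)
    (hz : ¬(z1 = 0 ∧ z2 = 0))
    (hq : (a111*z1+a112*z2)*(a221*z1+a222*z2) - (a121*z1+a122*z2)*(a211*z1+a212*z2) = 0)
    (hg1 : (a221*z1+a222*z2)*a111 - (a121*z1+a122*z2)*a211 - (a211*z1+a212*z2)*a121 + (a111*z1+a112*z2)*a221 = 0)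
    (hg2 : (a221*z1+a222*z2)*a112 - (a121*z1+a122*z2)*a212 - (a211*z1+a212*z2)*a122 + (a111*z1+a112*z2)*a222 = 0) :
    ∃ x1 x2 y1 y2 : ℂ, ¬(x1 = 0 ∧ x2 = 0) ∧ ¬(y1 = 0 ∧ y2 = 0) ∧
      a111 * y1 * z1 + a112 * y1 * z2 + a121 * y2 * z1 + a122 * y2 * z2 = 0 ∧
      a211 * y1 * z1 + a212 * y1 * z2 + a221 * y2 * z1 + a222 * y2 * z2 = 0 ∧
      a111 * x1 * z1 + a112 * x1 * z2 + a211 * x2 * z1 + a212 * x2 * z2 = 0 ∧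
      a121 * x1 * z1 + a122 * x1 * z2 + a221 * x2 * z1 + a222 * x2 * z2 = 0 ∧
      a111 * x1 * y1 + a121 * x1 * y2 + a211 * x2 * y1 + a221 * x2 * y2 = 0 ∧
      a112 * x1 * y1 + a122 * x1 * y2 + a212 * x2 * y1 + a222 * x2 * y2 = 0 := by
  by_cases h22 : (a221*z1+a222*z2) = 0
  · by_cases h21 : (a211*z1+a212*z2) = 0
    · by_cases h12 : (a121*z1+a122*z2) = 0
      · by_cases h11 : (a111*z1+a112*z2) = 0
        · -- M = 0 case
          rcases not_and_or.mp hz with hz1 | hz2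
          · by_cases hA : a112 = 0 ∧ a122 = 0
            · by_cases hB : a212 = 0 ∧ a222 = 0
              · refine ⟨1, 0, 1, 0, fun h => one_ne_zero h.1, fun h => one_ne_zero h.1,
                  ?_, ?_, ?_, ?_, ?_, ?_⟩
                · linear_combination h11
                · linear_combination h21
                · linear_combination h11
                · linear_combination h12
                · have h5 : a111 * z1 = 0 := by linear_combination h11 - z2 * hA.1
                  have := (mul_eq_zero.mp h5).resolve_right hz1
                  linear_combination this
                · linear_combination hA.1
              · refine ⟨0, 1, a222, -a212, fun h => one_ne_zero h.2,
                  fun h => hB ⟨neg_eq_zero.mp h.2, h.1⟩, ?_, ?_, ?_, ?_, ?_, ?_⟩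
                · linear_combination a222 * h11 - a212 * h12
                · linear_combination a222 * h21 - a212 * h22
                · linear_combination h21
                · linear_combination h22
                · have h5 : (a211 * a222 - a221 * a212) * z1 = 0 := by
                    linear_combination a222 * h21 - a212 * h22
                  have := (mul_eq_zero.mp h5).resolve_right hz1
                  linear_combination this
                · ring
            · refine ⟨1, 0, a122, -a112, fun h => one_ne_zero h.1,
                fun h => hA ⟨neg_eq_zero.mp h.2, h.1⟩, ?_, ?_, ?_, ?_, ?_, ?_⟩
              · linear_combination a122 * h11 - a112 * h12
              · linear_combination a122 * h21 - a112 * h22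
              · linear_combination h11
              · linear_combination h12
              · have h5 : (a111 * a122 - a121 * a112) * z1 = 0 := by
                  linear_combination a122 * h11 - a112 * h12
                have := (mul_eq_zero.mp h5).resolve_right hz1
                linear_combination this
              · ring
          · by_cases hA : a111 = 0 ∧ a121 = 0
            · by_cases hB : a211 = 0 ∧ a221 = 0
              · refine ⟨1, 0, 1, 0, fun h => one_ne_zero h.1, fun h => one_ne_zero h.1,
                  ?_, ?_, ?_, ?_, ?_, ?_⟩
                · linear_combination h11
                · linear_combination h21
                · linear_combination h11
                · linear_combination h12
                · linear_combination hA.1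
                · have h6 : a112 * z2 = 0 := by linear_combination h11 - z1 * hA.1
                  have := (mul_eq_zero.mp h6).resolve_right hz2
                  linear_combination this
              · refine ⟨0, 1, a221, -a211, fun h => one_ne_zero h.2,
                  fun h => hB ⟨neg_eq_zero.mp h.2, h.1⟩, ?_, ?_, ?_, ?_, ?_, ?_⟩
                · linear_combination a221 * h11 - a211 * h12
                · linear_combination a221 * h21 - a211 * h22
                · linear_combination h21
                · linear_combination h22
                · ring
                · have h6 : (a212 * a221 - a222 * a211) * z2 = 0 := by
                    linear_combination a221 * h21 - a211 * h22
                  have := (mul_eq_zero.mp h6).resolve_right hz2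
                  linear_combination this
            · refine ⟨1, 0, a121, -a111, fun h => one_ne_zero h.1,
                fun h => hA ⟨neg_eq_zero.mp h.2, h.1⟩, ?_, ?_, ?_, ?_, ?_, ?_⟩
              · linear_combination a121 * h11 - a111 * h12
              · linear_combination a121 * h21 - a111 * h22
              · linear_combination h11
              · linear_combination h12
              · ring
              · have h6 : (a112 * a121 - a122 * a111) * z2 = 0 := by
                  linear_combination a121 * h11 - a111 * h12
                have := (mul_eq_zero.mp h6).resolve_right hz2
                linear_combination this
        · -- corner m11 ≠ 0 : x = (m21, -m11), y = (m12, -m11)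
          refine ⟨(a211*z1+a212*z2), -(a111*z1+a112*z2), (a121*z1+a122*z2), -(a111*z1+a112*z2),
            fun h => h11 (neg_eq_zero.mp h.2), fun h => h11 (neg_eq_zero.mp h.2),
            ?_, ?_, ?_, ?_, ?_, ?_⟩
          · ring
          · linear_combination -hq
          · ring
          · linear_combination -hq
          · linear_combination (a111*z1+a112*z2) * hg1 - a111 * hq
          · linear_combination (a111*z1+a112*z2) * hg2 - a112 * hq
      · -- corner m12 ≠ 0 : x = (m22, -m12), y = (m12, -m11)
        refine ⟨(a221*z1+a222*z2), -(a121*z1+a122*z2), (a121*z1+a122*z2), -(a111*z1+a112*z2),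
          fun h => h12 (neg_eq_zero.mp h.2), fun h => h12 h.1, ?_, ?_, ?_, ?_, ?_, ?_⟩
        · ring
        · linear_combination -hq
        · linear_combination hq
        · ring
        · linear_combination (a121*z1+a122*z2) * hg1 - a121 * hq
        · linear_combination (a121*z1+a122*z2) * hg2 - a122 * hq
    · -- corner m21 ≠ 0 : x = (m21, -m11), y = (m22, -m21)
      refine ⟨(a211*z1+a212*z2), -(a111*z1+a112*z2), (a221*z1+a222*z2), -(a211*z1+a212*z2),
        fun h => h21 h.1, fun h => h21 (neg_eq_zero.mp h.2), ?_, ?_, ?_, ?_, ?_, ?_⟩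
      · linear_combination hq
      · ring
      · ring
      · linear_combination -hq
      · linear_combination (a211*z1+a212*z2) * hg1 - a211 * hq
      · linear_combination (a211*z1+a212*z2) * hg2 - a212 * hq
  · -- corner m22 ≠ 0 : x = (m22, -m12), y = (m22, -m21)
    refine ⟨(a221*z1+a222*z2), -(a121*z1+a122*z2), (a221*z1+a222*z2), -(a211*z1+a212*z2),
      fun h => h22 h.1, fun h => h22 h.1, ?_, ?_, ?_, ?_, ?_, ?_⟩
    · linear_combination hq
    · ring
    · linear_combination hq
    · ring
    · linear_combination (a221*z1+a222*z2) * hg1 - a221 * hq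
    · linear_combination (a221*z1+a222*z2) * hg2 - a222 * hq

private lemma key_D (a111 a112 a121 a122 a211 a212 a221 a222 z1 z2 : ℂ)
    (hz : ¬(z1 = 0 ∧ z2 = 0))
    (hq : (a111*z1+a112*z2)*(a221*z1+a222*z2) - (a121*z1+a122*z2)*(a211*z1+a212*z2) = 0)
    (hg1 : (a221*z1+a222*z2)*a111 - (a121*z1+a122*z2)*a211 - (a211*z1+a212*z2)*a121 + (a111*z1+a112*z2)*a221 = 0)
    (hg2 : (a221*z1+a222*z2)*a112 - (a121*z1+a122*z2)*a212 - (a211*z1+a212*z2)*a122 + (a111*z1+a112*z2)*a222 = 0) :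
    (a111*a222 - a121*a212 + a112*a221 - a211*a122)^2
      - 4*(a111*a221 - a121*a211)*(a112*a222 - a122*a212) = 0 := by
  have h1 : ((a111*a222 - a121*a212 + a112*a221 - a211*a122)^2
      - 4*(a111*a221 - a121*a211)*(a112*a222 - a122*a212)) * z1^2 = 0 := by
    linear_combination ((a221*z1+a222*z2)*a112 - (a121*z1+a122*z2)*a212 - (a211*z1+a212*z2)*a122 + (a111*z1+a112*z2)*a222) * hg2 - 4*(a112*a222 - a122*a212) * hq
  have h2 : ((a111*a222 - a121*a212 + a112*a221 - a211*a122)^2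
      - 4*(a111*a221 - a121*a211)*(a112*a222 - a122*a212)) * z2^2 = 0 := by
    linear_combination ((a221*z1+a222*z2)*a111 - (a121*z1+a122*z2)*a211 - (a211*z1+a212*z2)*a121 + (a111*z1+a112*z2)*a221) * hg1 - 4*(a111*a221 - a121*a211) * hq
  rcases not_and_or.mp hz with h | h
  · exact (mul_eq_zero.mp h1).resolve_right (pow_ne_zero _ h)
  · exact (mul_eq_zero.mp h2).resolve_right (pow_ne_zero _ h)

/-- For a 2×2×2 integer hypermatrix with hyperdeterminant `D`, one has
`D = 0` iff there exist nonzero vectors `x, y, z ∈ ℂ²` at which all six partial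
derivatives of the associated trilinear form vanish. -/
theorem stmt_9 (a111 a112 a121 a122 a211 a212 a221 a222 D : ℤ)
    (hD : D = a122 ^ 2 * a211 ^ 2 + a111 ^ 2 * a222 ^ 2 + a212 ^ 2 * a121 ^ 2 +
        a112 ^ 2 * a221 ^ 2
      - 2 * a111 * a122 * a211 * a222 - 2 * a211 * a122 * a112 * a221
      - 2 * a211 * a122 * a212 * a121 - 2 * a222 * a111 * a212 * a121
      - 2 * a222 * a111 * a112 * a221 - 2 * a112 * a121 * a212 * a221
      + 4 * a112 * a121 * a211 * a222 + 4 * a111 * a122 * a212 * a221) :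
    D = 0 ↔ ∃ x₁ x₂ y₁ y₂ z₁ z₂ : ℂ,
      (x₁, x₂) ≠ (0, 0) ∧ (y₁, y₂) ≠ (0, 0) ∧ (z₁, z₂) ≠ (0, 0) ∧
      -- ∂f/∂x₁ and ∂f/∂x₂
      (a111 : ℂ) * y₁ * z₁ + a112 * y₁ * z₂ + a121 * y₂ * z₁ + a122 * y₂ * z₂ = 0 ∧
      (a211 : ℂ) * y₁ * z₁ + a212 * y₁ * z₂ + a221 * y₂ * z₁ + a222 * y₂ * z₂ = 0 ∧
      -- ∂f/∂y₁ and ∂f/∂y₂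
      (a111 : ℂ) * x₁ * z₁ + a112 * x₁ * z₂ + a211 * x₂ * z₁ + a212 * x₂ * z₂ = 0 ∧
      (a121 : ℂ) * x₁ * z₁ + a122 * x₁ * z₂ + a221 * x₂ * z₁ + a222 * x₂ * z₂ = 0 ∧
      -- ∂f/∂z₁ and ∂f/∂z₂
      (a111 : ℂ) * x₁ * y₁ + a121 * x₁ * y₂ + a211 * x₂ * y₁ + a221 * x₂ * y₂ = 0 ∧
      (a112 : ℂ) * x₁ * y₁ + a122 * x₁ * y₂ + a212 * x₂ * y₁ + a222 * x₂ * y₂ = 0 := by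
  constructor
  · intro hD0
    have hB : (a111*a222 - a121*a212 + a112*a221 - a211*a122)^2 - 4*(a111*a221 - a121*a211)*(a112*a222 - a122*a212) = 0 := by rw [hD] at hD0; linear_combination hD0
    have hBC : ((a111:ℂ)*(a222:ℂ) - (a121:ℂ)*(a212:ℂ) + (a112:ℂ)*(a221:ℂ) - (a211:ℂ)*(a122:ℂ))^2 - 4*((a111:ℂ)*(a221:ℂ) - (a121:ℂ)*(a211:ℂ))*((a112:ℂ)*(a222:ℂ) - (a122:ℂ)*(a212:ℂ)) = 0 := by exact_mod_cast hB
    by_cases hb0 : a111 * a221 - a121 * a211 = 0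
    · by_cases hb2 : a112 * a222 - a122 * a212 = 0
      · have hb1 : a111 * a222 - a121 * a212 + a112 * a221 - a211 * a122 = 0 := by
          have h : (a111 * a222 - a121 * a212 + a112 * a221 - a211 * a122) ^ 2 = 0 := by
            linear_combination hB + 4 * (a112 * a222 - a122 * a212) * hb0
          exact sq_eq_zero_iff.mp h
        have hb0C : (a111:ℂ) * (a221:ℂ) - (a121:ℂ) * (a211:ℂ) = 0 := by exact_mod_cast hb0
        have hb1C : ((a111:ℂ)*(a222:ℂ) - (a121:ℂ)*(a212:ℂ) + (a112:ℂ)*(a221:ℂ) - (a211:ℂ)*(a122:ℂ)) = 0 := by exact_mod_cast hb1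
        obtain ⟨x1, x2, y1, y2, hx, hy, e1, e2, e3, e4, e5, e6⟩ :=
          key_exists (a111:ℂ) (a112:ℂ) (a121:ℂ) (a122:ℂ) (a211:ℂ) (a212:ℂ) (a221:ℂ) (a222:ℂ) 1 0
            (by simp) (by linear_combination hb0C) (by linear_combination 2 * hb0C)
            (by linear_combination hb1C)
        exact ⟨x1, x2, y1, y2, 1, 0, by simpa [Prod.ext_iff] using hx,
          by simpa [Prod.ext_iff] using hy, by simp, e1, e2, e3, e4, e5, e6⟩
      · obtain ⟨x1, x2, y1, y2, hx, hy, e1, e2, e3, e4, e5, e6⟩ :=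
          key_exists (a111:ℂ) (a112:ℂ) (a121:ℂ) (a122:ℂ) (a211:ℂ) (a212:ℂ) (a221:ℂ) (a222:ℂ)
            (2 * ((a112:ℂ)*(a222:ℂ) - (a122:ℂ)*(a212:ℂ))) (-((a111:ℂ)*(a222:ℂ) - (a121:ℂ)*(a212:ℂ) + (a112:ℂ)*(a221:ℂ) - (a211:ℂ)*(a122:ℂ)))
            (by
              intro h
              exact hb2 (by exact_mod_cast
                (show ((a112:ℂ)*(a222:ℂ) - (a122:ℂ)*(a212:ℂ)) = 0 by linear_combination h.1 / 2)))
            (by linear_combination (-((a112:ℂ)*(a222:ℂ) - (a122:ℂ)*(a212:ℂ))) * hBC)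
            (by linear_combination (-1 : ℂ) * hBC)
            (by ring)
        refine ⟨x1, x2, y1, y2, 2 * ((a112:ℂ)*(a222:ℂ) - (a122:ℂ)*(a212:ℂ)), -((a111:ℂ)*(a222:ℂ) - (a121:ℂ)*(a212:ℂ) + (a112:ℂ)*(a221:ℂ) - (a211:ℂ)*(a122:ℂ)), by simpa [Prod.ext_iff] using hx,
          by simpa [Prod.ext_iff] using hy, ?_, e1, e2, e3, e4, e5, e6⟩
        intro h
        rw [Prod.mk.injEq] at h
        exact hb2 (by exact_mod_cast (show ((a112:ℂ)*(a222:ℂ) - (a122:ℂ)*(a212:ℂ)) = 0 by linear_combination h.1 / 2))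
    · obtain ⟨x1, x2, y1, y2, hx, hy, e1, e2, e3, e4, e5, e6⟩ :=
        key_exists (a111:ℂ) (a112:ℂ) (a121:ℂ) (a122:ℂ) (a211:ℂ) (a212:ℂ) (a221:ℂ) (a222:ℂ)
          (-((a111:ℂ)*(a222:ℂ) - (a121:ℂ)*(a212:ℂ) + (a112:ℂ)*(a221:ℂ) - (a211:ℂ)*(a122:ℂ))) (2 * ((a111:ℂ)*(a221:ℂ) - (a121:ℂ)*(a211:ℂ)))
          (by
            intro h
            exact hb0 (by exact_mod_cast
              (show ((a111:ℂ)*(a221:ℂ) - (a121:ℂ)*(a211:ℂ)) = 0 by linear_combination h.2 / 2)))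
          (by linear_combination (-((a111:ℂ)*(a221:ℂ) - (a121:ℂ)*(a211:ℂ))) * hBC)
          (by ring)
          (by linear_combination (-1 : ℂ) * hBC)
      refine ⟨x1, x2, y1, y2, -((a111:ℂ)*(a222:ℂ) - (a121:ℂ)*(a212:ℂ) + (a112:ℂ)*(a221:ℂ) - (a211:ℂ)*(a122:ℂ)), 2 * ((a111:ℂ)*(a221:ℂ) - (a121:ℂ)*(a211:ℂ)), by simpa [Prod.ext_iff] using hx,
        by simpa [Prod.ext_iff] using hy, ?_, e1, e2, e3, e4, e5, e6⟩
      intro h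
      rw [Prod.mk.injEq] at h
      exact hb0 (by exact_mod_cast (show ((a111:ℂ)*(a221:ℂ) - (a121:ℂ)*(a211:ℂ)) = 0 by linear_combination h.2 / 2))
  · rintro ⟨x1, x2, y1, y2, z1, z2, hx, hy, hz, e1, e2, e3, e4, e5, e6⟩
    have hx' : ¬(x1 = 0 ∧ x2 = 0) := by simpa [Prod.ext_iff] using hx
    have hy' : ¬(y1 = 0 ∧ y2 = 0) := by simpa [Prod.ext_iff] using hy
    have hz' : ¬(z1 = 0 ∧ z2 = 0) := by simpa [Prod.ext_iff] using hz
    have hq : ((a111:ℂ)*z1+(a112:ℂ)*z2)*((a221:ℂ)*z1+(a222:ℂ)*z2) - ((a121:ℂ)*z1+(a122:ℂ)*z2)*((a211:ℂ)*z1+(a212:ℂ)*z2) = 0 := by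
      have k1 : (((a111:ℂ)*z1+(a112:ℂ)*z2)*((a221:ℂ)*z1+(a222:ℂ)*z2) - ((a121:ℂ)*z1+(a122:ℂ)*z2)*((a211:ℂ)*z1+(a212:ℂ)*z2)) * y1 = 0 := by linear_combination ((a221:ℂ)*z1+(a222:ℂ)*z2) * e1 - ((a121:ℂ)*z1+(a122:ℂ)*z2) * e2
      have k2 : (((a111:ℂ)*z1+(a112:ℂ)*z2)*((a221:ℂ)*z1+(a222:ℂ)*z2) - ((a121:ℂ)*z1+(a122:ℂ)*z2)*((a211:ℂ)*z1+(a212:ℂ)*z2)) * y2 = 0 := by linear_combination ((a111:ℂ)*z1+(a112:ℂ)*z2) * e2 - ((a211:ℂ)*z1+(a212:ℂ)*z2) * e1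
      rcases not_and_or.mp hy' with h | h
      · exact (mul_eq_zero.mp k1).resolve_right h
      · exact (mul_eq_zero.mp k2).resolve_right h
    have hg : (((a221:ℂ)*z1+(a222:ℂ)*z2)*(a111:ℂ) - ((a121:ℂ)*z1+(a122:ℂ)*z2)*(a211:ℂ) - ((a211:ℂ)*z1+(a212:ℂ)*z2)*(a121:ℂ) + ((a111:ℂ)*z1+(a112:ℂ)*z2)*(a221:ℂ) = 0) ∧ (((a221:ℂ)*z1+(a222:ℂ)*z2)*(a112:ℂ) - ((a121:ℂ)*z1+(a122:ℂ)*z2)*(a212:ℂ) - ((a211:ℂ)*z1+(a212:ℂ)*z2)*(a122:ℂ) + ((a111:ℂ)*z1+(a112:ℂ)*z2)*(a222:ℂ) = 0) := by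
      by_cases h22 : ((a221:ℂ)*z1+(a222:ℂ)*z2) = 0
      · by_cases h21 : ((a211:ℂ)*z1+(a212:ℂ)*z2) = 0
        · by_cases h12 : ((a121:ℂ)*z1+(a122:ℂ)*z2) = 0
          · by_cases h11 : ((a111:ℂ)*z1+(a112:ℂ)*z2) = 0
            · exact ⟨by linear_combination (a111:ℂ)*h22 - (a211:ℂ)*h12 - (a121:ℂ)*h21 + (a221:ℂ)*h11,
                by linear_combination (a112:ℂ)*h22 - (a212:ℂ)*h12 - (a122:ℂ)*h21 + (a222:ℂ)*h11⟩
            · -- corner m11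
              have hy2 : y2 ≠ 0 := by
                intro h0
                have hk : ((a111:ℂ)*z1+(a112:ℂ)*z2) * y1 = 0 := by linear_combination e1 - ((a121:ℂ)*z1+(a122:ℂ)*z2) * h0
                rcases not_and_or.mp hy' with h | h
                · exact h ((mul_eq_zero.mp hk).resolve_left h11)
                · exact h h0
              have hx2 : x2 ≠ 0 := by
                intro h0
                have hk : ((a111:ℂ)*z1+(a112:ℂ)*z2) * x1 = 0 := by linear_combination e3 - ((a211:ℂ)*z1+(a212:ℂ)*z2) * h0
                rcases not_and_or.mp hx' with h | h
                · exact h ((mul_eq_zero.mp hk).resolve_left h11)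
                · exact h h0
              constructor
              · refine cancel3 hx2 hy2 h11 ?_
                show x2 * y2 * ((a111:ℂ)*z1+(a112:ℂ)*z2) * (((a221:ℂ)*z1+(a222:ℂ)*z2)*(a111:ℂ) - ((a121:ℂ)*z1+(a122:ℂ)*z2)*(a211:ℂ) - ((a211:ℂ)*z1+(a212:ℂ)*z2)*(a121:ℂ) + ((a111:ℂ)*z1+(a112:ℂ)*z2)*(a221:ℂ)) = 0
                linear_combination ((a111:ℂ)*z1+(a112:ℂ)*z2)^2*e5 + (a111:ℂ)*x2*y2*hq - (a111:ℂ)*((a111:ℂ)*x1*z1 + (a112:ℂ)*x1*z2 + (a211:ℂ)*x2*z1 + (a212:ℂ)*x2*z2)*e1 + (a111:ℂ)*((a121:ℂ)*z1+(a122:ℂ)*z2)*y2*e3 + (a111:ℂ)*((a211:ℂ)*z1+(a212:ℂ)*z2)*x2*e1 - (a121:ℂ)*y2*((a111:ℂ)*z1+(a112:ℂ)*z2)*e3 - (a211:ℂ)*x2*((a111:ℂ)*z1+(a112:ℂ)*z2)*e1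
              · refine cancel3 hx2 hy2 h11 ?_
                show x2 * y2 * ((a111:ℂ)*z1+(a112:ℂ)*z2) * (((a221:ℂ)*z1+(a222:ℂ)*z2)*(a112:ℂ) - ((a121:ℂ)*z1+(a122:ℂ)*z2)*(a212:ℂ) - ((a211:ℂ)*z1+(a212:ℂ)*z2)*(a122:ℂ) + ((a111:ℂ)*z1+(a112:ℂ)*z2)*(a222:ℂ)) = 0
                linear_combination ((a111:ℂ)*z1+(a112:ℂ)*z2)^2*e6 + (a112:ℂ)*x2*y2*hq - (a112:ℂ)*((a111:ℂ)*x1*z1 + (a112:ℂ)*x1*z2 + (a211:ℂ)*x2*z1 + (a212:ℂ)*x2*z2)*e1 + (a112:ℂ)*((a121:ℂ)*z1+(a122:ℂ)*z2)*y2*e3 + (a112:ℂ)*((a211:ℂ)*z1+(a212:ℂ)*z2)*x2*e1 - (a122:ℂ)*y2*((a111:ℂ)*z1+(a112:ℂ)*z2)*e3 - (a212:ℂ)*x2*((a111:ℂ)*z1+(a112:ℂ)*z2)*e1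
          · -- corner m12
            have hy1 : y1 ≠ 0 := by
              intro h0
              have hk : ((a121:ℂ)*z1+(a122:ℂ)*z2) * y2 = 0 := by linear_combination e1 - ((a111:ℂ)*z1+(a112:ℂ)*z2) * h0
              rcases not_and_or.mp hy' with h | h
              · exact h h0
              · exact h ((mul_eq_zero.mp hk).resolve_left h12)
            have hx2 : x2 ≠ 0 := by
              intro h0
              have hk : ((a121:ℂ)*z1+(a122:ℂ)*z2) * x1 = 0 := by linear_combination e4 - ((a221:ℂ)*z1+(a222:ℂ)*z2) * h0
              rcases not_and_or.mp hx' with h | h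
              · exact h ((mul_eq_zero.mp hk).resolve_left h12)
              · exact h h0
            constructor
            · refine cancel3 hx2 hy1 h12 ?_
              show x2 * y1 * ((a121:ℂ)*z1+(a122:ℂ)*z2) * (((a221:ℂ)*z1+(a222:ℂ)*z2)*(a111:ℂ) - ((a121:ℂ)*z1+(a122:ℂ)*z2)*(a211:ℂ) - ((a211:ℂ)*z1+(a212:ℂ)*z2)*(a121:ℂ) + ((a111:ℂ)*z1+(a112:ℂ)*z2)*(a221:ℂ)) = 0
              linear_combination (-((a121:ℂ)*z1+(a122:ℂ)*z2)^2)*e5 + (a121:ℂ)*x2*y1*hq + (a111:ℂ)*y1*((a121:ℂ)*z1+(a122:ℂ)*z2)*e4 + (a121:ℂ)*((a121:ℂ)*x1*z1 + (a122:ℂ)*x1*z2 + (a221:ℂ)*x2*z1 + (a222:ℂ)*x2*z2)*e1 - (a121:ℂ)*((a111:ℂ)*z1+(a112:ℂ)*z2)*y1*e4 - (a121:ℂ)*((a221:ℂ)*z1+(a222:ℂ)*z2)*x2*e1 + (a221:ℂ)*((a121:ℂ)*z1+(a122:ℂ)*z2)*x2*e1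
            · refine cancel3 hx2 hy1 h12 ?_
              show x2 * y1 * ((a121:ℂ)*z1+(a122:ℂ)*z2) * (((a221:ℂ)*z1+(a222:ℂ)*z2)*(a112:ℂ) - ((a121:ℂ)*z1+(a122:ℂ)*z2)*(a212:ℂ) - ((a211:ℂ)*z1+(a212:ℂ)*z2)*(a122:ℂ) + ((a111:ℂ)*z1+(a112:ℂ)*z2)*(a222:ℂ)) = 0
              linear_combination (-((a121:ℂ)*z1+(a122:ℂ)*z2)^2)*e6 + (a122:ℂ)*x2*y1*hq + (a112:ℂ)*y1*((a121:ℂ)*z1+(a122:ℂ)*z2)*e4 + (a122:ℂ)*((a121:ℂ)*x1*z1 + (a122:ℂ)*x1*z2 + (a221:ℂ)*x2*z1 + (a222:ℂ)*x2*z2)*e1 - (a122:ℂ)*((a111:ℂ)*z1+(a112:ℂ)*z2)*y1*e4 - (a122:ℂ)*((a221:ℂ)*z1+(a222:ℂ)*z2)*x2*e1 + (a222:ℂ)*((a121:ℂ)*z1+(a122:ℂ)*z2)*x2*e1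
        · -- corner m21
          have hy2 : y2 ≠ 0 := by
            intro h0
            have hk : ((a211:ℂ)*z1+(a212:ℂ)*z2) * y1 = 0 := by linear_combination e2 - ((a221:ℂ)*z1+(a222:ℂ)*z2) * h0
            rcases not_and_or.mp hy' with h | h
            · exact h ((mul_eq_zero.mp hk).resolve_left h21)
            · exact h h0
          have hx1 : x1 ≠ 0 := by
            intro h0
            have hk : ((a211:ℂ)*z1+(a212:ℂ)*z2) * x2 = 0 := by linear_combination e3 - ((a111:ℂ)*z1+(a112:ℂ)*z2) * h0
            rcases not_and_or.mp hx' with h | h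
            · exact h h0
            · exact h ((mul_eq_zero.mp hk).resolve_left h21)
          constructor
          · refine cancel3 hx1 hy2 h21 ?_
            show x1 * y2 * ((a211:ℂ)*z1+(a212:ℂ)*z2) * (((a221:ℂ)*z1+(a222:ℂ)*z2)*(a111:ℂ) - ((a121:ℂ)*z1+(a122:ℂ)*z2)*(a211:ℂ) - ((a211:ℂ)*z1+(a212:ℂ)*z2)*(a121:ℂ) + ((a111:ℂ)*z1+(a112:ℂ)*z2)*(a221:ℂ)) = 0
            linear_combination (-((a211:ℂ)*z1+(a212:ℂ)*z2)^2)*e5 + (a211:ℂ)*x1*y2*hq + (a111:ℂ)*x1*((a211:ℂ)*z1+(a212:ℂ)*z2)*e2 + (a211:ℂ)*((a111:ℂ)*x1*z1 + (a112:ℂ)*x1*z2 + (a211:ℂ)*x2*z1 + (a212:ℂ)*x2*z2)*e2 - (a211:ℂ)*((a221:ℂ)*z1+(a222:ℂ)*z2)*y2*e3 - (a211:ℂ)*((a111:ℂ)*z1+(a112:ℂ)*z2)*x1*e2 + (a221:ℂ)*((a211:ℂ)*z1+(a212:ℂ)*z2)*y2*e3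
          · refine cancel3 hx1 hy2 h21 ?_
            show x1 * y2 * ((a211:ℂ)*z1+(a212:ℂ)*z2) * (((a221:ℂ)*z1+(a222:ℂ)*z2)*(a112:ℂ) - ((a121:ℂ)*z1+(a122:ℂ)*z2)*(a212:ℂ) - ((a211:ℂ)*z1+(a212:ℂ)*z2)*(a122:ℂ) + ((a111:ℂ)*z1+(a112:ℂ)*z2)*(a222:ℂ)) = 0
            linear_combination (-((a211:ℂ)*z1+(a212:ℂ)*z2)^2)*e6 + (a212:ℂ)*x1*y2*hq + (a112:ℂ)*x1*((a211:ℂ)*z1+(a212:ℂ)*z2)*e2 + (a212:ℂ)*((a111:ℂ)*x1*z1 + (a112:ℂ)*x1*z2 + (a211:ℂ)*x2*z1 + (a212:ℂ)*x2*z2)*e2 - (a212:ℂ)*((a221:ℂ)*z1+(a222:ℂ)*z2)*y2*e3 - (a212:ℂ)*((a111:ℂ)*z1+(a112:ℂ)*z2)*x1*e2 + (a222:ℂ)*((a211:ℂ)*z1+(a212:ℂ)*z2)*y2*e3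
      · -- corner m22
        have hy1 : y1 ≠ 0 := by
          intro h0
          have hk : ((a221:ℂ)*z1+(a222:ℂ)*z2) * y2 = 0 := by linear_combination e2 - ((a211:ℂ)*z1+(a212:ℂ)*z2) * h0
          rcases not_and_or.mp hy' with h | h
          · exact h h0
          · exact h ((mul_eq_zero.mp hk).resolve_left h22)
        have hx1 : x1 ≠ 0 := by
          intro h0
          have hk : ((a221:ℂ)*z1+(a222:ℂ)*z2) * x2 = 0 := by linear_combination e4 - ((a121:ℂ)*z1+(a122:ℂ)*z2) * h0
          rcases not_and_or.mp hx' with h | h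
          · exact h h0
          · exact h ((mul_eq_zero.mp hk).resolve_left h22)
        constructor
        · refine cancel3 hx1 hy1 h22 ?_
          show x1 * y1 * ((a221:ℂ)*z1+(a222:ℂ)*z2) * (((a221:ℂ)*z1+(a222:ℂ)*z2)*(a111:ℂ) - ((a121:ℂ)*z1+(a122:ℂ)*z2)*(a211:ℂ) - ((a211:ℂ)*z1+(a212:ℂ)*z2)*(a121:ℂ) + ((a111:ℂ)*z1+(a112:ℂ)*z2)*(a221:ℂ)) = 0
          linear_combination ((a221:ℂ)*z1+(a222:ℂ)*z2)^2*e5 + (-(a121:ℂ)*x1*((a221:ℂ)*z1+(a222:ℂ)*z2) + (a221:ℂ)*((a121:ℂ)*z1+(a122:ℂ)*z2)*x1 - (a221:ℂ)*((a121:ℂ)*x1*z1 + (a122:ℂ)*x1*z2 + (a221:ℂ)*x2*z1 + (a222:ℂ)*x2*z2))*e2 + (-(a211:ℂ)*y1*((a221:ℂ)*z1+(a222:ℂ)*z2) + (a221:ℂ)*((a211:ℂ)*z1+(a212:ℂ)*z2)*y1)*e4 + (a221:ℂ)*x1*y1*hq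
        · refine cancel3 hx1 hy1 h22 ?_
          show x1 * y1 * ((a221:ℂ)*z1+(a222:ℂ)*z2) * (((a221:ℂ)*z1+(a222:ℂ)*z2)*(a112:ℂ) - ((a121:ℂ)*z1+(a122:ℂ)*z2)*(a212:ℂ) - ((a211:ℂ)*z1+(a212:ℂ)*z2)*(a122:ℂ) + ((a111:ℂ)*z1+(a112:ℂ)*z2)*(a222:ℂ)) = 0
          linear_combination ((a221:ℂ)*z1+(a222:ℂ)*z2)^2*e6 + (-(a122:ℂ)*x1*((a221:ℂ)*z1+(a222:ℂ)*z2) + (a222:ℂ)*((a121:ℂ)*z1+(a122:ℂ)*z2)*x1 - (a222:ℂ)*((a121:ℂ)*x1*z1 + (a122:ℂ)*x1*z2 + (a221:ℂ)*x2*z1 + (a222:ℂ)*x2*z2))*e2 + (-(a212:ℂ)*y1*((a221:ℂ)*z1+(a222:ℂ)*z2) + (a222:ℂ)*((a211:ℂ)*z1+(a212:ℂ)*z2)*y1)*e4 + (a222:ℂ)*x1*y1*hq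
    have hBD := key_D (a111:ℂ) (a112:ℂ) (a121:ℂ) (a122:ℂ) (a211:ℂ) (a212:ℂ) (a221:ℂ) (a222:ℂ)
      z1 z2 hz' hq hg.1 hg.2
    have hBint : (a111*a222 - a121*a212 + a112*a221 - a211*a122)^2 - 4*(a111*a221 - a121*a211)*(a112*a222 - a122*a212) = 0 := by exact_mod_cast hBD
    rw [hD]; linear_combination hBint
end

section
/- Let A = (a_{ijk}) be a 2×2×2 integer hypermatrix with hyperdeterminant D and trilinear form f. Define the four linear forms L^{(ij)}(z) = a_{ij1}z₁ + a_{ij2}z₂ for i,j ∈ {1,2} (the coefficients of f(x,y,z) viewed as a bilinear form in (x,y)). Suppose q is a nonzero integer and z = (z₁,z₂) ∈ ℤ² is a primitive vector (gcd(z₁,z₂) = 1) such that q divides L^{(ij)}(z) for all i,j ∈ {1,2}. Then q² divides D. -/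
/-- For a 2×2×2 integer hypermatrix with hyperdeterminant `D`, if a
nonzero integer `q` divides the values `L^{(ij)}(z) = a_{ij1}z₁ + a_{ij2}z₂` for all
`i,j ∈ {1,2}` at some primitive vector `z ∈ ℤ²`, then `q² ∣ D`. -/
theorem stmt_11 (a111 a112 a121 a122 a211 a212 a221 a222 D : ℤ)
    (hD : D = a122 ^ 2 * a211 ^ 2 + a111 ^ 2 * a222 ^ 2 + a212 ^ 2 * a121 ^ 2 +
        a112 ^ 2 * a221 ^ 2
      - 2 * a111 * a122 * a211 * a222 - 2 * a211 * a122 * a112 * a221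
      - 2 * a211 * a122 * a212 * a121 - 2 * a222 * a111 * a212 * a121
      - 2 * a222 * a111 * a112 * a221 - 2 * a112 * a121 * a212 * a221
      + 4 * a112 * a121 * a211 * a222 + 4 * a111 * a122 * a212 * a221)
    (q : ℤ) (hq : q ≠ 0) (z₁ z₂ : ℤ) (hz : Int.gcd z₁ z₂ = 1)
    (h11 : q ∣ a111 * z₁ + a112 * z₂)
    (h12 : q ∣ a121 * z₁ + a122 * z₂)
    (h21 : q ∣ a211 * z₁ + a212 * z₂)
    (h22 : q ∣ a221 * z₁ + a222 * z₂) :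
    q ^ 2 ∣ D := by
  -- Bezout: a unimodular companion vector w
  have hbez : z₁ * Int.gcdA z₁ z₂ + z₂ * Int.gcdB z₁ z₂ = 1 := by
    have := Int.gcd_eq_gcd_ab z₁ z₂
    omega
  set w₂ := Int.gcdA z₁ z₂ with hw2
  set w₁ := -Int.gcdB z₁ z₂ with hw1
  have hdet : z₁ * w₂ - z₂ * w₁ = 1 := by rw [hw1]; linarith
  set L11z := a111 * z₁ + a112 * z₂ with hL11z
  set L12z := a121 * z₁ + a122 * z₂ with hL12z
  set L21z := a211 * z₁ + a212 * z₂ with hL21z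
  set L22z := a221 * z₁ + a222 * z₂ with hL22z
  set L11w := a111 * w₁ + a112 * w₂ with hL11w
  set L12w := a121 * w₁ + a122 * w₂ with hL12w
  set L21w := a211 * w₁ + a212 * w₂ with hL21w
  set L22w := a221 * w₁ + a222 * w₂ with hL22w
  have key : D = (L11z * L22w + L11w * L22z - L12z * L21w - L12w * L21z) ^ 2
      - 4 * (L11z * L22z - L12z * L21z) * (L11w * L22w - L12w * L21w) := by
    have : D * (z₁ * w₂ - z₂ * w₁) ^ 2 =
        (L11z * L22w + L11w * L22z - L12z * L21w - L12w * L21z) ^ 2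
        - 4 * (L11z * L22z - L12z * L21z) * (L11w * L22w - L12w * L21w) := by
      rw [hD, hL11z, hL12z, hL21z, hL22z, hL11w, hL12w, hL21w, hL22w]; ring
    rw [hdet] at this; linarith
  rw [key]
  have hB : q ∣ L11z * L22w + L11w * L22z - L12z * L21w - L12w * L21z := by
    exact dvd_sub (dvd_add (h11.mul_right _) (Dvd.dvd.mul_left h22 _))
      (h12.mul_right _) |>.sub (Dvd.dvd.mul_left h21 _)
  have h1 : q ^ 2 ∣ (L11z * L22w + L11w * L22z - L12z * L21w - L12w * L21z) ^ 2 :=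
    pow_dvd_pow_of_dvd hB 2
  have h2 : q ^ 2 ∣ 4 * (L11z * L22z - L12z * L21z) * (L11w * L22w - L12w * L21w) := by
    have : q ^ 2 ∣ L11z * L22z - L12z * L21z := by
      have := mul_dvd_mul h11 h22
      have := mul_dvd_mul h12 h21
      simpa [pow_two] using dvd_sub (mul_dvd_mul h11 h22) (mul_dvd_mul h12 h21)
    exact ((this.mul_left 4).mul_right _)
  exact dvd_sub h1 h2
end
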